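/- arXiv:nlin/0004019 — 8 statements merged into one kernel-verified Lean document; each statement's English description precedes it below -/
import Mathlib

section
/- For every a ∈ Q and t ∈ [0,T₀), the function t ↦ g(a,t) is differentiable and satisfies the nonlocal conservative Riccati equation along Lagrangian labels: ∂_t g(a,t) = −g(a,t)² + (2/|Q|) ∫_Q g(b,t)² J(b,τ(t)) db; moreover g(a,0) = φ₀(a). -/
open MeasureTheory Real Set Filter

/-!
Write `P_τ = 1 + τ φ₀` and `A = ∫ 1/P_τ`, `B = ∫ φ₀/P_τ²`, `C = ∫ φ₀²/P_τ³` over `Q`, so that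
`F = A/|Q|`, `φ̄ = B/A` and `α = (|Q|/A)²`. Differentiating under the integral sign (legitimate
because `P_τ` stays bounded away from `0` for `τ < τ*`) gives `A' = -B` and `B' = -2C`. Hence the
label-wise profile `τ ↦ α(τ) (φ₀/P_τ - φ̄(τ))` has `τ`-derivative
`α (-(φ₀/P_τ - φ̄)² + 2 (C/A - φ̄²))`, and `τ' = α` turns this into
`∂ₜ g = -g² + 2 α² (C/A - φ̄²)`. The nonlocal term is the same quantity:
`g² J = (α²/F) (φ₀/P - φ̄)²/P` and `∫ (φ₀/P - φ̄)²/P = C - B²/A`, i.e. `C/A - φ̄²` is the variance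
of `φ₀/P` for the probability weights `1/(A P)`.
-/

section WeightedMoment

variable {α : Type*} [MeasurableSpace α] {μ : Measure α} {u : α → ℝ} {M δ τ : ℝ}

noncomputable def weightedMoment (μ : Measure α) (u : α → ℝ) (k m : ℕ) (τ : ℝ) : ℝ :=
  ∫ a, u a ^ k / (1 + τ * u a) ^ m ∂μ

theorem weightedMoment_zero_one :
    weightedMoment μ u 0 1 τ = ∫ a, 1 / (1 + τ * u a) ∂μ := by
  simp only [weightedMoment, pow_zero, pow_one]

theorem weightedMoment_one_two :
    weightedMoment μ u 1 2 τ = ∫ a, u a / (1 + τ * u a) ^ 2 ∂μ := by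
  simp only [weightedMoment, pow_one]

theorem abs_pow_div_one_add_mul_pow_le {x : ℝ} (hx : |x| ≤ M) (hδ : 0 < δ) (hP : δ ≤ 1 + τ * x)
    (k m : ℕ) : |x ^ k / (1 + τ * x) ^ m| ≤ M ^ k / δ ^ m := by
  rw [abs_div, abs_pow, abs_pow, abs_of_pos (hδ.trans_le hP)]
  exact div_le_div₀ (pow_nonneg ((abs_nonneg x).trans hx) k) (pow_le_pow_left₀ (abs_nonneg x) hx k)
    (pow_pos hδ m) (pow_le_pow_left₀ hδ.le hP m)

theorem half_le_one_add_mul_of_mem_ball {x r : ℝ} (hM : 0 < M) (hx : |x| ≤ M) (hP : δ ≤ 1 + τ * x)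
    (hr : r ∈ Metric.ball τ (δ / (2 * M))) : δ / 2 ≤ 1 + r * x := by
  have hshift : |(r - τ) * x| ≤ δ / 2 := by
    rw [abs_mul]
    calc |r - τ| * |x| ≤ δ / (2 * M) * M :=
          mul_le_mul (Metric.mem_ball.1 hr).le hx (abs_nonneg x) (Metric.pos_of_mem_ball hr).le
      _ = δ / 2 := by field_simp
  linarith [neg_abs_le ((r - τ) * x)]

theorem hasDerivAt_pow_div_one_add_mul_pow (x : ℝ) (k m : ℕ) (hP : 1 + τ * x ≠ 0) :
    HasDerivAt (fun r => x ^ k / (1 + r * x) ^ (m + 1))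
      (-((m : ℝ) + 1) * (x ^ (k + 1) / (1 + τ * x) ^ (m + 2))) τ := by
  have hlin : HasDerivAt (fun r : ℝ => 1 + r * x) x τ := by
    simpa using (hasDerivAt_mul_const x).const_add 1
  refine ((hasDerivAt_const τ (x ^ k)).div (hlin.pow (m + 1)) (pow_ne_zero _ hP)).congr_deriv ?_
  simp only [Pi.pow_apply]
  field_simp
  push_cast
  ring

theorem aemeasurable_pow_div_one_add_mul_pow (hu : AEMeasurable u μ) (k m : ℕ) :
    AEMeasurable (fun a => u a ^ k / (1 + τ * u a) ^ m) μ := by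
  fun_prop

variable [IsFiniteMeasure μ]

theorem integrable_pow_div_one_add_mul_pow (hu : AEMeasurable u μ) (hM : ∀ᵐ a ∂μ, |u a| ≤ M)
    (hδ : 0 < δ) (hP : ∀ᵐ a ∂μ, δ ≤ 1 + τ * u a) (k m : ℕ) :
    Integrable (fun a => u a ^ k / (1 + τ * u a) ^ m) μ := by
  refine (integrable_const (M ^ k / δ ^ m)).mono'
    (aemeasurable_pow_div_one_add_mul_pow hu k m).aestronglyMeasurable ?_
  filter_upwards [hM, hP] with a hMa hPa
  exact abs_pow_div_one_add_mul_pow_le hMa hδ hPa k m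

theorem hasDerivAt_weightedMoment (hu : AEMeasurable u μ) (hM0 : 0 < M)
    (hM : ∀ᵐ a ∂μ, |u a| ≤ M) (hδ : 0 < δ) (hP : ∀ᵐ a ∂μ, δ ≤ 1 + τ * u a) (k m : ℕ) :
    HasDerivAt (weightedMoment μ u k (m + 1))
      (-((m : ℝ) + 1) * weightedMoment μ u (k + 1) (m + 2) τ) τ := by
  have hball : ∀ᵐ a ∂μ, ∀ r ∈ Metric.ball τ (δ / (2 * M)), δ / 2 ≤ 1 + r * u a := by
    filter_upwards [hM, hP] with a hMa hPa r hr using half_le_one_add_mul_of_mem_ball hM0 hMa hPa hr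
  have key := hasDerivAt_integral_of_dominated_loc_of_deriv_le (μ := μ)
    (F := fun r a => u a ^ k / (1 + r * u a) ^ (m + 1))
    (F' := fun r a => -((m : ℝ) + 1) * (u a ^ (k + 1) / (1 + r * u a) ^ (m + 2)))
    (bound := fun _ => ((m : ℝ) + 1) * (M ^ (k + 1) / (δ / 2) ^ (m + 2)))
    (Metric.ball_mem_nhds τ (ε := δ / (2 * M)) (by positivity))
    (Eventually.of_forall fun _ =>
      (aemeasurable_pow_div_one_add_mul_pow hu k _).aestronglyMeasurable)
    (integrable_pow_div_one_add_mul_pow hu hM hδ hP k (m + 1))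
    ((aemeasurable_pow_div_one_add_mul_pow hu _ _).const_mul _).aestronglyMeasurable
    ?_ (integrable_const _) ?_
  · unfold weightedMoment
    simpa only [integral_const_mul] using key.2
  · filter_upwards [hM, hball] with a hMa hb r hr
    rw [norm_mul, norm_neg, Real.norm_eq_abs, Real.norm_eq_abs, abs_of_pos (by positivity)]
    exact mul_le_mul_of_nonneg_left
      (abs_pow_div_one_add_mul_pow_le hMa (half_pos hδ) (hb r hr) _ _) (by positivity)
  · filter_upwards [hball] with a hb r hr
    exact hasDerivAt_pow_div_one_add_mul_pow _ k m (by linarith [hb r hr])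

theorem weightedMoment_zero_one_pos [NeZero μ] (hu : AEMeasurable u μ)
    (hM : ∀ᵐ a ∂μ, |u a| ≤ M) (hδ : 0 < δ) (hP : ∀ᵐ a ∂μ, δ ≤ 1 + τ * u a) :
    0 < weightedMoment μ u 0 1 τ := by
  obtain ⟨a₀, ha₀⟩ := hM.exists
  have hM0 : 0 ≤ M := (abs_nonneg _).trans ha₀
  have hlow : ∀ᵐ a ∂μ, (1 + |τ| * M)⁻¹ ≤ u a ^ 0 / (1 + τ * u a) ^ 1 := by
    filter_upwards [hM, hP] with a hMa hPa
    rw [pow_zero, pow_one, one_div]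
    refine inv_anti₀ (hδ.trans_le hPa) ?_
    nlinarith [le_abs_self (τ * u a), abs_mul τ (u a), abs_nonneg τ]
  calc 0 < μ.real univ * (1 + |τ| * M)⁻¹ := mul_pos measureReal_univ_pos (by positivity)
    _ = ∫ _, (1 + |τ| * M)⁻¹ ∂μ := by rw [integral_const, smul_eq_mul]
    _ ≤ weightedMoment μ u 0 1 τ := integral_mono_ae (integrable_const _)
      (integrable_pow_div_one_add_mul_pow hu hM hδ hP 0 1) hlow

theorem integral_sq_sub_div_one_add_mul (hu : AEMeasurable u μ) (hM : ∀ᵐ a ∂μ, |u a| ≤ M)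
    (hδ : 0 < δ) (hP : ∀ᵐ a ∂μ, δ ≤ 1 + τ * u a) (c : ℝ) :
    ∫ a, (u a / (1 + τ * u a) - c) ^ 2 / (1 + τ * u a) ∂μ =
      weightedMoment μ u 2 3 τ - 2 * c * weightedMoment μ u 1 2 τ
        + c ^ 2 * weightedMoment μ u 0 1 τ := by
  have hint := integrable_pow_div_one_add_mul_pow hu hM hδ hP
  have hexpand : (fun a => (u a / (1 + τ * u a) - c) ^ 2 / (1 + τ * u a)) =ᵐ[μ]
      fun a => u a ^ 2 / (1 + τ * u a) ^ 3 - 2 * c * (u a ^ 1 / (1 + τ * u a) ^ 2)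
        + c ^ 2 * (u a ^ 0 / (1 + τ * u a) ^ 1) := by
    filter_upwards [hP] with a hPa
    have : 1 + τ * u a ≠ 0 := (hδ.trans_le hPa).ne'
    generalize 1 + τ * u a = P at this ⊢
    field_simp
    ring
  rw [integral_congr_ae hexpand, integral_add, integral_sub, integral_const_mul, integral_const_mul]
  · rfl
  · exact hint 2 3
  · exact (hint 1 2).const_mul _
  · exact (hint 2 3).sub ((hint 1 2).const_mul _)
  · exact (hint 0 1).const_mul _

theorem hasDerivAt_riccati_of_hasDerivAt_moments {A B : ℝ → ℝ} {C c x : ℝ}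
    (hA : HasDerivAt A (-B τ) τ) (hB : HasDerivAt B (-(2 * C)) τ) (hA0 : A τ ≠ 0) (hc : c ≠ 0)
    (hx : 1 + τ * x ≠ 0) :
    HasDerivAt (fun r => ((c * A r) ^ 2)⁻¹ * (x / (1 + r * x) - B r / A r))
      (((c * A τ) ^ 2)⁻¹ *
        (-(x / (1 + τ * x) - B τ / A τ) ^ 2 + 2 * (C / A τ - (B τ / A τ) ^ 2))) τ := by
  have hquot : HasDerivAt (fun r => x / (1 + r * x)) (-(x ^ 2 / (1 + τ * x) ^ 2)) τ := by
    simpa using hasDerivAt_pow_div_one_add_mul_pow x 1 0 hx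
  refine ((((hA.const_mul c).pow 2).inv (pow_ne_zero 2 (mul_ne_zero hc hA0))).mul
    (hquot.sub (hB.div hA hA0))).congr_deriv ?_
  simp only [Pi.pow_apply, Pi.inv_apply, Pi.sub_apply, Pi.div_apply]
  generalize 1 + τ * x = P at hx ⊢
  field_simp
  ring

theorem hasDerivAt_riccati_weightedMoment [NeZero μ] {c x : ℝ}
    (hu : AEMeasurable u μ) (hM0 : 0 < M) (hM : ∀ᵐ a ∂μ, |u a| ≤ M) (hδ : 0 < δ)
    (hP : ∀ᵐ a ∂μ, δ ≤ 1 + τ * u a) (hc : c ≠ 0) (hx : 1 + τ * x ≠ 0) :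
    HasDerivAt (fun r => ((c * weightedMoment μ u 0 1 r) ^ 2)⁻¹ *
        (x / (1 + r * x) - weightedMoment μ u 1 2 r / weightedMoment μ u 0 1 r))
      (((c * weightedMoment μ u 0 1 τ) ^ 2)⁻¹ *
        (-(x / (1 + τ * x) - weightedMoment μ u 1 2 τ / weightedMoment μ u 0 1 τ) ^ 2 +
          2 / weightedMoment μ u 0 1 τ * ∫ a, (u a / (1 + τ * u a) -
            weightedMoment μ u 1 2 τ / weightedMoment μ u 0 1 τ) ^ 2 / (1 + τ * u a) ∂μ)) τ := by
  have hA := hasDerivAt_weightedMoment hu hM0 hM hδ hP 0 0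
  have hB := hasDerivAt_weightedMoment hu hM0 hM hδ hP 1 1
  have hA0 := (weightedMoment_zero_one_pos hu hM hδ hP).ne'
  norm_num at hA hB
  refine (hasDerivAt_riccati_of_hasDerivAt_moments hA hB hA0 hc hx).congr_deriv ?_
  rw [integral_sq_sub_div_one_add_mul hu hM hδ hP]
  field_simp
  ring

end WeightedMoment

theorem volume_real_Icc_square {L : ℝ} (hL : 0 ≤ L) :
    volume.real (Icc ((0 : ℝ), (0 : ℝ)) (L, L)) = L ^ 2 := by
  rw [measureReal_def, ← Icc_prod_Icc, Measure.volume_eq_prod, Measure.prod_prod, Real.volume_Icc,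
    sub_zero, ← ENNReal.ofReal_mul hL, ENNReal.toReal_ofReal (by positivity), sq]

theorem stmt_0_general
    (L : ℝ) (hL : 0 < L)
    (Q : Set (ℝ × ℝ)) (hQ : Q = Set.Icc (0, 0) (L, L))
    (φ₀ : ℝ × ℝ → ℝ) (hφcont : ContinuousOn φ₀ Q)
    (hmean : ∫ a in Q, φ₀ a = 0)
    (m₀ : ℝ) (hmin : ∀ a ∈ Q, m₀ ≤ φ₀ a)
    (hm₀ : m₀ < 0)
    (τstar : ℝ) (hτstar : τstar = -1 / m₀)
    (F φbar α : ℝ → ℝ)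
    (hF : ∀ τ ∈ Set.Ico 0 τstar, F τ = (1 / L ^ 2) * ∫ a in Q, 1 / (1 + τ * φ₀ a))
    (hφbar : ∀ τ ∈ Set.Ico 0 τstar,
      φbar τ = (∫ a in Q, φ₀ a / (1 + τ * φ₀ a) ^ 2) / (∫ a in Q, 1 / (1 + τ * φ₀ a)))
    (hα : ∀ τ ∈ Set.Ico 0 τstar, α τ = ((F τ) ^ 2)⁻¹)
    (J : ℝ × ℝ → ℝ → ℝ)
    (hJ : ∀ τ ∈ Set.Ico 0 τstar, ∀ a ∈ Q, J a τ = 1 / ((1 + τ * φ₀ a) * F τ))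
    (T₀ : EReal) (hT₀ : 0 < T₀)
    (D : Set ℝ) (hD : D = {t : ℝ | 0 ≤ t ∧ (t : EReal) < T₀})
    (τ : ℝ → ℝ) (hτ0 : τ 0 = 0)
    (hτmem : ∀ t ∈ D, τ t ∈ Set.Ico 0 τstar)
    (hτ' : ∀ t ∈ D, HasDerivWithinAt τ (α (τ t)) D t)
    (g : ℝ × ℝ → ℝ → ℝ)
    (hg : ∀ a ∈ Q, ∀ t ∈ D,
      g a t = α (τ t) * (φ₀ a / (1 + τ t * φ₀ a) - φbar (τ t))) :
    ∀ a ∈ Q, ∀ t ∈ D,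
      HasDerivWithinAt (g a)
        (-(g a t) ^ 2 + (2 / L ^ 2) * ∫ b in Q, (g b t) ^ 2 * J b (τ t)) D t
      ∧ g a 0 = φ₀ a := by
  have hQm : MeasurableSet Q := hQ ▸ measurableSet_Icc
  have hQc : IsCompact Q := hQ ▸ isCompact_Icc
  set μ : Measure (ℝ × ℝ) := volume.restrict Q
  have hvol : volume.real Q = L ^ 2 := hQ ▸ volume_real_Icc_square hL.le
  have : IsFiniteMeasure μ := isFiniteMeasure_restrict.2 hQc.measure_lt_top.ne
  have : NeZero μ := ⟨fun h => by
    simp only [measureReal_def, Measure.restrict_eq_zero.1 h, ENNReal.toReal_zero] at hvol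
    exact (pow_pos hL 2).ne hvol⟩
  obtain ⟨M, hM⟩ := hQc.exists_bound_of_continuousOn hφcont
  have hMae : ∀ᵐ b ∂μ, |φ₀ b| ≤ max M 1 :=
    ae_restrict_of_forall_mem (μ := volume) hQm fun b hb => (hM b hb).trans (le_max_left _ _)
  have hφm : AEMeasurable φ₀ μ := hφcont.aemeasurable hQm
  simp only [← weightedMoment_zero_one, ← weightedMoment_one_two] at hF hφbar
  intro a ha t ht
  obtain ⟨hτnn, hτlt⟩ := hτmem t ht
  have hδ : 0 < 1 + τ t * m₀ := by
    rw [hτstar, lt_div_iff_of_neg hm₀] at hτlt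
    linarith
  have hP : ∀ b ∈ Q, 1 + τ t * m₀ ≤ 1 + τ t * φ₀ b := fun b hb => by nlinarith [hmin b hb]
  have hPae := ae_restrict_of_forall_mem (μ := volume) hQm hP
  have hG := hasDerivAt_riccati_weightedMoment hφm (lt_max_of_lt_right one_pos) hMae hδ hPae
    (by positivity : 1 / L ^ 2 ≠ 0) (hδ.trans_le (hP a ha)).ne'
  have hgG : ∀ x ∈ D, g a x = ((1 / L ^ 2 * weightedMoment μ φ₀ 0 1 (τ x)) ^ 2)⁻¹ *
      (φ₀ a / (1 + τ x * φ₀ a) - weightedMoment μ φ₀ 1 2 (τ x) / weightedMoment μ φ₀ 0 1 (τ x)) :=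
    fun x hx => by
      rw [hg a ha x hx, hα _ (hτmem x hx), hF _ (hτmem x hx), hφbar _ (hτmem x hx)]
  refine ⟨((hG.comp_hasDerivWithinAt t (hτ' t ht)).congr hgG (hgG t ht)).congr_deriv ?_, ?_⟩
  · have hmem := hτmem t ht
    have hI : ∫ b in Q, g b t ^ 2 * J b (τ t) = α (τ t) ^ 2 / F (τ t) *
        ∫ b, (φ₀ b / (1 + τ t * φ₀ b) - φbar (τ t)) ^ 2 / (1 + τ t * φ₀ b) ∂μ := by
      rw [← integral_const_mul]
      refine setIntegral_congr_fun hQm fun b hb => ?_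
      rw [hg b hb t ht, hJ _ hmem b hb, one_div, mul_inv]
      ring
    have hA0 := (weightedMoment_zero_one_pos hφm hMae hδ hPae).ne'
    rw [hI, hg a ha t ht, hα _ hmem, hF _ hmem, hφbar _ hmem]
    field_simp
  · have h0 : (0 : ℝ) ∈ Ico 0 τstar :=
      ⟨le_rfl, hτstar ▸ div_pos_of_neg_of_neg (by norm_num) hm₀⟩
    have hD0 : (0 : ℝ) ∈ D := hD ▸ ⟨le_rfl, EReal.coe_zero ▸ hT₀⟩
    rw [hg a ha 0 hD0, hτ0, hα 0 h0, hF 0 h0, hφbar 0 h0]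
    simp [weightedMoment, hmean, μ, hvol, hL.ne']

/-- Along Lagrangian labels, `g(a,·)` is differentiable on `[0,T₀)` and solves the
nonlocal conservative Riccati equation
`∂ₜ g(a,t) = −g(a,t)² + (2/|Q|) ∫_Q g(b,t)² J(b,τ(t)) db`, with `g(a,0) = φ₀(a)`. -/
theorem stmt_0
    (L : ℝ) (hL : 0 < L)
    (Q : Set (ℝ × ℝ)) (hQ : Q = Set.Icc (0, 0) (L, L))
    (φ₀ : ℝ × ℝ → ℝ) (hφcont : ContinuousOn φ₀ Q)
    (hmean : ∫ a in Q, φ₀ a = 0)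
    (m₀ : ℝ) (hmin : ∀ a ∈ Q, m₀ ≤ φ₀ a) (hatt : ∃ a ∈ Q, φ₀ a = m₀)
    (hm₀ : m₀ < 0)
    (τstar : ℝ) (hτstar : τstar = -1 / m₀)
    (F φbar α : ℝ → ℝ)
    (hF : ∀ τ ∈ Set.Ico 0 τstar, F τ = (1 / L ^ 2) * ∫ a in Q, 1 / (1 + τ * φ₀ a))
    (hφbar : ∀ τ ∈ Set.Ico 0 τstar,
      φbar τ = (∫ a in Q, φ₀ a / (1 + τ * φ₀ a) ^ 2) / (∫ a in Q, 1 / (1 + τ * φ₀ a)))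
    (hα : ∀ τ ∈ Set.Ico 0 τstar, α τ = ((F τ) ^ 2)⁻¹)
    (J : ℝ × ℝ → ℝ → ℝ)
    (hJ : ∀ τ ∈ Set.Ico 0 τstar, ∀ a ∈ Q, J a τ = 1 / ((1 + τ * φ₀ a) * F τ))
    (T₀ : EReal) (hT₀ : 0 < T₀)
    (D : Set ℝ) (hD : D = {t : ℝ | 0 ≤ t ∧ (t : EReal) < T₀})
    (τ : ℝ → ℝ) (hτ0 : τ 0 = 0)
    (hτmem : ∀ t ∈ D, τ t ∈ Set.Ico 0 τstar)
    (hτ' : ∀ t ∈ D, HasDerivWithinAt τ (α (τ t)) D t)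
    (g : ℝ × ℝ → ℝ → ℝ)
    (hg : ∀ a ∈ Q, ∀ t ∈ D,
      g a t = α (τ t) * (φ₀ a / (1 + τ t * φ₀ a) - φbar (τ t))) :
    ∀ a ∈ Q, ∀ t ∈ D,
      HasDerivWithinAt (g a)
        (-(g a t) ^ 2 + (2 / L ^ 2) * ∫ b in Q, (g b t) ^ 2 * J b (τ t)) D t
      ∧ g a 0 = φ₀ a :=
  stmt_0_general L hL Q hQ φ₀ hφcont hmean m₀ hmin hm₀ τstar hτstar F φbar α hF hφbar hα J hJ T₀ hT₀
    D hD τ hτ0 hτmem hτ' g hg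
end

section
/- The function φ̄ is differentiable on [0,τ*) and satisfies φ̄'(τ) = φ̄(τ)² − (2/(|Q| F(τ))) ∫_Q φ₀(a)²/(1+τφ₀(a))³ da for every τ ∈ [0,τ*). -/
open MeasureTheory Real Set Filter Metric

/-! Write `D(τ) = ∫_Q 1/(1+τφ₀)` and `N(τ) = ∫_Q φ₀/(1+τφ₀)²`, so that `φ̄ = N/D` and `|Q| F = D`.
For `τ` in `[0,τ*)` the denominator `1 + tφ₀` is bounded away from `0` uniformly on the compact
square for all `t` near `τ`, which justifies differentiation under the integral sign:
`D' = -N` and `N' = -2 ∫_Q φ₀²/(1+τφ₀)³`. The quotient rule then gives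
`φ̄' = (N² - 2 D ∫_Q φ₀²/(1+τφ₀)³) / D²`, which is the claimed formula. -/

lemma one_add_mul_pos_of_lt_neg_one_div {m x τ : ℝ} (hτ : 0 ≤ τ) (hτm : τ < -1 / m)
    (hx : m ≤ x) : 0 < 1 + τ * x := by
  rcases lt_or_ge m 0 with hm | hm
  · have : τ * -m < 1 := by rwa [neg_div, ← div_neg, lt_div_iff₀ (neg_pos.2 hm)] at hτm
    nlinarith
  · nlinarith

section ParametricIntegral

variable {X : Type*} [TopologicalSpace X] {K : Set X} {φ : X → ℝ} {t₀ : ℝ}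

lemma IsCompact.exists_forall_ball_le_one_add_mul (hK : IsCompact K) (hφ : ContinuousOn φ K)
    (h : ∀ a ∈ K, 0 < 1 + t₀ * φ a) :
    ∃ ε > 0, ∃ c > 0, ∀ a ∈ K, ∀ t ∈ ball t₀ ε, c ≤ 1 + t * φ a := by
  obtain ⟨m, hm, hmK⟩ := hK.exists_forall_le' (f := fun a => 1 + t₀ * φ a) (by fun_prop) h
  obtain ⟨C, hC⟩ := hK.exists_bound_of_continuousOn hφ
  refine ⟨m / (2 * (|C| + 1)), by positivity, m / 2, by positivity, fun a ha t ht => ?_⟩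
  have hφC : |φ a| ≤ |C| + 1 := by linarith [le_abs_self C, hC a ha, Real.norm_eq_abs (φ a)]
  have hdist : |t - t₀| * (|C| + 1) ≤ m / 2 := by
    rw [mem_ball, Real.dist_eq, lt_div_iff₀ (by positivity)] at ht
    linarith
  have hdev : |(t - t₀) * φ a| ≤ m / 2 := by
    rw [abs_mul]
    exact (mul_le_mul_of_nonneg_left hφC (abs_nonneg _)).trans hdist
  linarith [neg_abs_le ((t - t₀) * φ a), hmK a ha]

variable [MeasurableSpace X] [OpensMeasurableSpace X] {μ : Measure X} [IsFiniteMeasureOnCompacts μ]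

lemma ContinuousOn.setIntegral_pos_of_pos {f : X → ℝ} (hf : ContinuousOn f K) (hK : IsCompact K)
    (hKm : MeasurableSet K) (hpos : ∀ a ∈ K, 0 < f a) (hμK : μ K ≠ 0) :
    0 < ∫ a in K, f a ∂μ := by
  have hsupp : Function.support f ∩ K = K :=
    inter_eq_right.2 fun a ha => (hpos a ha).ne'
  rw [setIntegral_pos_iff_support_of_nonneg_ae _ (hf.integrableOn_compact' hK hKm), hsupp]
  · exact pos_iff_ne_zero.2 hμK
  · filter_upwards [ae_restrict_mem hKm] with a ha using (hpos a ha).le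

lemma hasDerivAt_setIntegral_pow_div_one_add_mul_pow (hK : IsCompact K) (hKm : MeasurableSet K)
    (hφ : ContinuousOn φ K) (p k : ℕ) (h : ∀ a ∈ K, 0 < 1 + t₀ * φ a) :
    HasDerivAt (fun t => ∫ a in K, φ a ^ p / (1 + t * φ a) ^ (k + 1) ∂μ)
      (-(k + 1) * ∫ a in K, φ a ^ (p + 1) / (1 + t₀ * φ a) ^ (k + 2) ∂μ) t₀ := by
  obtain ⟨ε, hε, c, hc, hlow⟩ := hK.exists_forall_ball_le_one_add_mul hφ h
  obtain ⟨C, hC⟩ := hK.exists_bound_of_continuousOn hφ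
  have hcont : ∀ t ∈ ball t₀ ε, ∀ m n : ℕ,
      ContinuousOn (fun a => φ a ^ m / (1 + t * φ a) ^ n) K := fun t ht m n =>
    (hφ.pow m).div ((continuousOn_const.add (continuousOn_const.mul hφ)).pow n)
      fun a ha => (pow_pos (hc.trans_le (hlow a ha t ht)) n).ne'
  have ht₀ : t₀ ∈ ball t₀ ε := mem_ball_self hε
  rw [← integral_const_mul]
  refine (hasDerivAt_integral_of_dominated_loc_of_deriv_le (μ := μ.restrict K)
    (F' := fun t a => -(k + 1) * (φ a ^ (p + 1) / (1 + t * φ a) ^ (k + 2)))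
    (bound := fun _ => (k + 1) * (C ^ (p + 1) / c ^ (k + 2)))
    (ball_mem_nhds t₀ hε)
    (eventually_of_mem (ball_mem_nhds t₀ hε) fun t ht =>
      (hcont t ht p (k + 1)).aestronglyMeasurable hKm)
    ((hcont t₀ ht₀ p (k + 1)).integrableOn_compact' hK hKm)
    (((hcont t₀ ht₀ (p + 1) (k + 2)).const_mul _).aestronglyMeasurable hKm)
    ?_ (integrableOn_const hK.measure_lt_top.ne) ?_).2
  · filter_upwards [ae_restrict_mem hKm] with a ha t ht
    have hφC : |φ a| ≤ C := by simpa using hC a ha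
    have hden := hlow a ha t ht
    rw [norm_mul, norm_div, norm_pow, norm_pow, Real.norm_eq_abs, Real.norm_eq_abs,
      Real.norm_eq_abs, abs_of_pos (hc.trans_le hden), abs_neg, abs_of_nonneg (by positivity)]
    have hC0 : 0 ≤ C := (abs_nonneg _).trans hφC
    gcongr
  · filter_upwards [ae_restrict_mem hKm] with a ha t ht
    have hden := (hc.trans_le (hlow a ha t ht)).ne'
    have hlin : HasDerivAt (fun s => 1 + s * φ a) (φ a) t := by
      simpa using ((hasDerivAt_id t).mul_const (φ a)).const_add 1
    refine ((hasDerivAt_const t (φ a ^ p)).div (hlin.pow (k + 1))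
      (pow_ne_zero _ hden)).congr_deriv ?_
    simp only [Pi.pow_apply, Nat.add_sub_cancel]
    field_simp
    push_cast
    ring

end ParametricIntegral

theorem stmt_3_general
    (L : ℝ) (hL : 0 < L)
    (Q : Set (ℝ × ℝ)) (hQ : Q = Set.Icc (0, 0) (L, L))
    (φ₀ : ℝ × ℝ → ℝ) (hφcont : ContinuousOn φ₀ Q)
    (m₀ : ℝ) (hmin : ∀ a ∈ Q, m₀ ≤ φ₀ a)
    (τstar : ℝ) (hτstar : τstar = -1 / m₀)
    (F φbar : ℝ → ℝ)
    (hF : ∀ τ ∈ Set.Ico 0 τstar, F τ = (1 / L ^ 2) * ∫ a in Q, 1 / (1 + τ * φ₀ a))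
    (hφbar : ∀ τ ∈ Set.Ico 0 τstar,
      φbar τ = (∫ a in Q, φ₀ a / (1 + τ * φ₀ a) ^ 2) / (∫ a in Q, 1 / (1 + τ * φ₀ a))) :
    ∀ τ ∈ Set.Ico 0 τstar,
      HasDerivWithinAt φbar
        ((φbar τ) ^ 2 - (2 / (L ^ 2 * F τ)) * ∫ a in Q, (φ₀ a) ^ 2 / (1 + τ * φ₀ a) ^ 3)
        (Set.Ico 0 τstar) τ := by
  intro τ hτ
  have hQc : IsCompact Q := hQ ▸ isCompact_Icc
  have hQm : MeasurableSet Q := hQ ▸ measurableSet_Icc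
  have hQvol : volume Q ≠ 0 := by
    rw [hQ, Icc_prod_eq, Measure.volume_eq_prod, Measure.prod_prod, Real.volume_Icc]
    simp [hL]
  have hden : ∀ a ∈ Q, 0 < 1 + τ * φ₀ a := fun a ha =>
    one_add_mul_pos_of_lt_neg_one_div hτ.1 (hτ.2.trans_eq hτstar) (hmin a ha)
  have hD := hasDerivAt_setIntegral_pow_div_one_add_mul_pow (μ := volume) hQc hQm hφcont 0 0 hden
  have hN := hasDerivAt_setIntegral_pow_div_one_add_mul_pow (μ := volume) hQc hQm hφcont 1 1 hden
  simp only [pow_zero, pow_one, zero_add, Nat.cast_zero, neg_mul, one_mul] at hD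
  simp only [pow_one, Nat.cast_one, one_add_one_eq_two, Nat.reduceAdd] at hN
  have hDpos : 0 < ∫ a in Q, 1 / (1 + τ * φ₀ a) :=
    (continuousOn_const.div (by fun_prop) fun a ha => (hden a ha).ne').setIntegral_pos_of_pos
      hQc hQm (fun a ha => one_div_pos.2 (hden a ha)) hQvol
  refine ((hN.div hD hDpos.ne').hasDerivWithinAt.congr hφbar (hφbar τ hτ)).congr_deriv ?_
  rw [hφbar τ hτ, hF τ hτ]
  generalize (∫ a in Q, 1 / (1 + τ * φ₀ a)) = D at hDpos ⊢
  generalize (∫ a in Q, φ₀ a / (1 + τ * φ₀ a) ^ 2) = N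
  generalize (∫ a in Q, φ₀ a ^ 2 / (1 + τ * φ₀ a) ^ 3) = K
  field_simp
  ring

/-- `φ̄` is differentiable on `[0,τ*)` with
`φ̄'(τ) = φ̄(τ)² − (2/(|Q| F(τ))) ∫_Q φ₀(a)²/(1+τφ₀(a))³ da`. -/
theorem stmt_3
    (L : ℝ) (hL : 0 < L)
    (Q : Set (ℝ × ℝ)) (hQ : Q = Set.Icc (0, 0) (L, L))
    (φ₀ : ℝ × ℝ → ℝ) (hφcont : ContinuousOn φ₀ Q)
    (hmean : ∫ a in Q, φ₀ a = 0)
    (m₀ : ℝ) (hmin : ∀ a ∈ Q, m₀ ≤ φ₀ a) (hatt : ∃ a ∈ Q, φ₀ a = m₀)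
    (hm₀ : m₀ < 0)
    (τstar : ℝ) (hτstar : τstar = -1 / m₀)
    (F φbar : ℝ → ℝ)
    (hF : ∀ τ ∈ Set.Ico 0 τstar, F τ = (1 / L ^ 2) * ∫ a in Q, 1 / (1 + τ * φ₀ a))
    (hφbar : ∀ τ ∈ Set.Ico 0 τstar,
      φbar τ = (∫ a in Q, φ₀ a / (1 + τ * φ₀ a) ^ 2) / (∫ a in Q, 1 / (1 + τ * φ₀ a))) :
    ∀ τ ∈ Set.Ico 0 τstar,
      HasDerivWithinAt φbar
        ((φbar τ) ^ 2 - (2 / (L ^ 2 * F τ)) * ∫ a in Q, (φ₀ a) ^ 2 / (1 + τ * φ₀ a) ^ 3)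
        (Set.Ico 0 τstar) τ :=
  stmt_3_general L hL Q hQ φ₀ hφcont m₀ hmin τstar hτstar F φbar hF hφbar
end

section
/- T is a strictly increasing continuous bijection from [0,τ*) onto [0,T*), where T* = sup_{τ∈[0,τ*)} T(τ) ∈ (0,∞], and its inverse function τ : [0,T*) → [0,τ*) is differentiable with τ(0) = 0 and τ'(t) = α(τ(t)) for all t ∈ [0,T*). -/
/-!
The kernel is a primitive in τ: `K_τ(a,b) = ∫₀^τ ds / ((1 + s φ₀ a)(1 + s φ₀ b))`. By Fubini,
`T(τ) = ∫₀^τ F(s)² ds`, so `T' = F² > 0` on `[0,τ*)`: `T` is continuous and strictly increasing, and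
by the intermediate value theorem it maps `[0,τ*)` onto `[0,T*)`. An inverse of a strictly monotone
function is continuous, so the inverse function rule gives `τ' = 1 / F(τ)² = α(τ)`.
-/

open MeasureTheory Real Set Filter Topology

lemma one_add_mul_pos_of_mem_Ioo {m M s x : ℝ} (hm : m < 0) (hM : 0 < M)
    (hs : s ∈ Ioo (-M⁻¹) (-m⁻¹)) (hx : x ∈ Icc m M) : 0 < 1 + s * x := by
  obtain ⟨hs₁, hs₂⟩ := hs
  rcases le_total 0 s with h | h
  · have : -m⁻¹ * m < s * m := mul_lt_mul_of_neg_right hs₂ hm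
    rw [neg_mul, inv_mul_cancel₀ hm.ne] at this
    nlinarith [hx.1]
  · have : -M⁻¹ * M < s * M := mul_lt_mul_of_pos_right hs₁ hM
    rw [neg_mul, inv_mul_cancel₀ hM.ne'] at this
    nlinarith [hx.2]

/-- The kernel `K_τ(a, b)`, written in terms of `A = φ₀ a` and `B = φ₀ b`. -/
noncomputable def logKernel (A B τ : ℝ) : ℝ :=
  if A ≠ B then log ((1 + τ * A) / (1 + τ * B)) / (A - B) else τ / (1 + τ * A)

lemma hasDerivAt_logKernel {A B s : ℝ} (hA : 0 < 1 + s * A) (hB : 0 < 1 + s * B) :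
    HasDerivAt (logKernel A B) ((1 + s * A) * (1 + s * B))⁻¹ s := by
  have hlin : ∀ C : ℝ, HasDerivAt (fun u : ℝ => 1 + u * C) C s := fun C => by
    simpa using ((hasDerivAt_id s).mul_const C).const_add 1
  unfold logKernel
  by_cases h : A = B
  · subst h
    simp only [ne_eq, not_true_eq_false, if_false]
    refine ((hasDerivAt_id s).div (hlin A) hA.ne').congr_deriv ?_
    simp only [id]
    field_simp
    ring
  · simp only [ne_eq, h, not_false_eq_true, if_true]
    refine ((((hlin A).div (hlin B) hB.ne').log
      (div_ne_zero hA.ne' hB.ne')).div_const (A - B)).congr_deriv ?_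
    have : A - B ≠ 0 := sub_ne_zero.mpr h
    simp only [Pi.div_apply]
    field_simp
    ring

lemma logKernel_eq_intervalIntegral {A B τ : ℝ}
    (hpos : ∀ s ∈ uIcc 0 τ, 0 < 1 + s * A ∧ 0 < 1 + s * B) :
    logKernel A B τ = ∫ s in (0:ℝ)..τ, ((1 + s * A) * (1 + s * B))⁻¹ := by
  have hint : IntervalIntegrable (fun s => ((1 + s * A) * (1 + s * B))⁻¹) volume 0 τ :=
    ContinuousOn.intervalIntegrable <| by
      refine ContinuousOn.inv₀ (by fun_prop) fun s hs => ?_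
      exact (mul_pos (hpos s hs).1 (hpos s hs).2).ne'
  rw [intervalIntegral.integral_eq_sub_of_hasDerivAt
    (fun s hs => hasDerivAt_logKernel (hpos s hs).1 (hpos s hs).2) hint]
  simp [logKernel]

theorem hasDerivAt_intervalIntegral_of_continuousOn {E : Type*} [NormedAddCommGroup E]
    [NormedSpace ℝ E] [CompleteSpace E] {f : ℝ → E} {U : Set ℝ} {a x : ℝ} (hU : IsOpen U)
    (hUc : U.OrdConnected) (ha : a ∈ U) (hx : x ∈ U) (hf : ContinuousOn f U) :
    HasDerivAt (fun u => ∫ t in a..u, f t) (f x) x :=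
  intervalIntegral.integral_hasDerivAt_right ((hf.mono (hUc.uIcc_subset ha hx)).intervalIntegrable)
    (hf.stronglyMeasurableAtFilter hU x hx) (hf.continuousAt (hU.mem_nhds hx))

theorem continuousOn_parametric_integral_of_continuousOn {X Y E : Type*} [TopologicalSpace X]
    [FirstCountableTopology X] [LocallyCompactSpace X] [TopologicalSpace Y] [T2Space Y]
    [MeasurableSpace Y] [OpensMeasurableSpace Y] {μ : Measure Y} [IsFiniteMeasureOnCompacts μ]
    [NormedAddCommGroup E] [NormedSpace ℝ E] {f : X → Y → E} {U : Set X} {K : Set Y}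
    (hU : IsOpen U) (hK : IsCompact K)
    (hf : ContinuousOn f.uncurry (U ×ˢ K)) :
    ContinuousOn (fun x => ∫ y in K, f x y ∂μ) U := by
  intro x₀ hx₀
  obtain ⟨V, hV, hx₀V, hVU⟩ := exists_compact_subset hU hx₀
  obtain ⟨C, hC⟩ := (hV.prod hK).exists_bound_of_continuousOn (hf.mono (prod_mono hVU le_rfl))
  have hslice : ∀ x ∈ U, ContinuousOn (f x) K := fun x hx =>
    hf.comp (continuousOn_const.prodMk continuousOn_id) fun y hy => ⟨hx, hy⟩
  refine (continuousAt_of_dominated (bound := fun _ => C) ?_ ?_ ?_ ?_).continuousWithinAt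
  · filter_upwards [mem_interior_iff_mem_nhds.mp hx₀V] with x hx
    exact (hslice x (hVU hx)).aestronglyMeasurable_of_isCompact hK hK.measurableSet
  · filter_upwards [mem_interior_iff_mem_nhds.mp hx₀V] with x hx
    filter_upwards [ae_restrict_mem hK.measurableSet] with y hy
    exact hC (x, y) ⟨hx, hy⟩
  · exact integrableOn_const hK.measure_ne_top
  · filter_upwards [ae_restrict_mem hK.measurableSet] with y hy
    have hpair : ContinuousWithinAt (fun x => (x, y)) U x₀ := by fun_prop
    have hcont := ContinuousWithinAt.comp (x := x₀) (hf (x₀, y) ⟨hx₀, hy⟩) hpair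
      fun x hx => mk_mem_prod hx hy
    exact hcont.continuousAt (hU.mem_nhds hx₀)

theorem integral_integral_intervalIntegral_mul_eq_intervalIntegral_sq
    {X : Type*} [TopologicalSpace X] [T2Space X] [SecondCountableTopology X] [MeasurableSpace X]
    [OpensMeasurableSpace X] {μ : Measure X} [SFinite μ] [IsFiniteMeasureOnCompacts μ]
    {K : Set X} (hK : IsCompact K) {τ : ℝ} (hτ : 0 ≤ τ) {h : ℝ → X → ℝ}
    (hh : ContinuousOn h.uncurry (Icc 0 τ ×ˢ K)) :
    ∫ x in K, (∫ y in K, (∫ s in (0:ℝ)..τ, h s x * h s y) ∂μ) ∂μ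
      = ∫ s in (0:ℝ)..τ, (∫ x in K, h s x ∂μ) ^ 2 := by
  have : IsFiniteMeasure (μ.restrict K) := isFiniteMeasure_restrict.2 hK.measure_ne_top
  set G : (X × X) × ℝ → ℝ := fun p => h p.2 p.1.1 * h p.2 p.1.2
  have hG : Integrable G (((μ.restrict K).prod (μ.restrict K)).prod
      (volume.restrict (Ioc 0 τ))) := by
    rw [Measure.prod_restrict, Measure.prod_restrict]
    refine ContinuousOn.integrableOn_of_subset_isCompact (K := (K ×ˢ K) ×ˢ Icc 0 τ) ?_
      ((hK.prod hK).prod isCompact_Icc) ((hK.measurableSet.prod hK.measurableSet).prod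
        measurableSet_Ioc) (prod_mono le_rfl Ioc_subset_Icc_self) ?_
    · have h₁ : ContinuousOn (fun p : (X × X) × ℝ => (p.2, p.1.1)) ((K ×ˢ K) ×ˢ Icc 0 τ) := by
        fun_prop
      have h₂ : ContinuousOn (fun p : (X × X) × ℝ => (p.2, p.1.2)) ((K ×ˢ K) ×ˢ Icc 0 τ) := by
        fun_prop
      exact (hh.comp h₁ fun p hp => ⟨hp.2, hp.1.1⟩).mul (hh.comp h₂ fun p hp => ⟨hp.2, hp.1.2⟩)
    · exact (((hK.prod hK).prod isCompact_Icc).measure_lt_top.trans_le' (measure_mono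
        (prod_mono le_rfl Ioc_subset_Icc_self))).ne
  simp_rw [intervalIntegral.integral_of_le hτ]
  calc ∫ x in K, (∫ y in K, (∫ s in Ioc 0 τ, h s x * h s y) ∂μ) ∂μ
      = ∫ p, (∫ s in Ioc 0 τ, G (p, s)) ∂((μ.restrict K).prod (μ.restrict K)) :=
        (integral_prod _ hG.integral_prod_left).symm
    _ = ∫ s in Ioc 0 τ, (∫ p, G (p, s) ∂((μ.restrict K).prod (μ.restrict K))) :=
        integral_integral_swap hG
    _ = ∫ s in Ioc 0 τ, (∫ x in K, h s x ∂μ) ^ 2 := by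
        simp only [G, integral_prod_mul, sq]

section

variable {X : Type*} [TopologicalSpace X] {K : Set X} {φ : X → ℝ}

theorem continuousOn_uncurry_inv_one_add_mul {U : Set ℝ} (hφ : ContinuousOn φ K)
    (hpos : ∀ s ∈ U, ∀ x ∈ K, 0 < 1 + s * φ x) :
    ContinuousOn (Function.uncurry fun s x => (1 + s * φ x)⁻¹) (U ×ˢ K) :=
  (continuousOn_const.add (continuousOn_fst.mul (hφ.comp continuousOn_snd fun _ hp => hp.2))).inv₀
    fun p hp => (hpos p.1 hp.1 p.2 hp.2).ne'

theorem exists_neg_forall_one_add_mul_pos {m : ℝ} (hK : IsCompact K) (hφ : ContinuousOn φ K)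
    (hm : m < 0) (hmin : ∀ x ∈ K, m ≤ φ x) :
    ∃ a < 0, ∀ s ∈ Ioo a (-m⁻¹), ∀ x ∈ K, 0 < 1 + s * φ x := by
  obtain ⟨C, hC⟩ := hK.exists_bound_of_continuousOn hφ
  refine ⟨-(|C| + 1)⁻¹, by simp only [Left.neg_neg_iff, inv_pos]; positivity,
    fun s hs x hx => one_add_mul_pos_of_mem_Ioo hm (by positivity) hs ⟨hmin x hx, ?_⟩⟩
  linarith [le_abs_self (φ x), hC x hx, le_abs_self C, Real.norm_eq_abs (φ x)]

variable [T2Space X] [MeasurableSpace X] [OpensMeasurableSpace X]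
  {μ : Measure X} [IsFiniteMeasureOnCompacts μ]

theorem IsCompact.setIntegral_pos_of_continuousOn {f : X → ℝ} (hK : IsCompact K)
    (hf : ContinuousOn f K) (hpos : ∀ x ∈ K, 0 < f x) (hμK : μ K ≠ 0) :
    0 < ∫ x in K, f x ∂μ := by
  have hne : K.Nonempty := nonempty_iff_ne_empty.2 fun h => hμK (h ▸ measure_empty)
  obtain ⟨x₀, hx₀, hmin⟩ := hK.exists_isMinOn hne hf
  calc 0 < f x₀ * μ.real K :=
        mul_pos (hpos x₀ hx₀) (ENNReal.toReal_pos hμK hK.measure_ne_top)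
    _ ≤ ∫ x in K, f x ∂μ :=
        setIntegral_ge_of_const_le_real hK.measurableSet hK.measure_ne_top hmin
          (hf.integrableOn_compact hK)

theorem integral_inv_one_add_mul_pos {s : ℝ} (hK : IsCompact K) (hφ : ContinuousOn φ K)
    (hμK : μ K ≠ 0) (hpos : ∀ x ∈ K, 0 < 1 + s * φ x) :
    0 < ∫ x in K, (1 + s * φ x)⁻¹ ∂μ :=
  hK.setIntegral_pos_of_continuousOn
    ((continuousOn_const.add (continuousOn_const.mul hφ)).inv₀ fun x hx => (hpos x hx).ne')
    (fun x hx => inv_pos.2 (hpos x hx)) hμK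

theorem integral_integral_logKernel_eq [SecondCountableTopology X] [SFinite μ]
    (hK : IsCompact K) (hφ : ContinuousOn φ K) {τ : ℝ} (hτ : 0 ≤ τ)
    (hpos : ∀ s ∈ Icc 0 τ, ∀ x ∈ K, 0 < 1 + s * φ x) :
    ∫ x in K, (∫ y in K, logKernel (φ x) (φ y) τ ∂μ) ∂μ
      = ∫ s in (0:ℝ)..τ, (∫ x in K, (1 + s * φ x)⁻¹ ∂μ) ^ 2 := by
  have hpos' : ∀ x ∈ K, ∀ s ∈ uIcc 0 τ, 0 < 1 + s * φ x := fun x hx s hs =>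
    hpos s (uIcc_of_le hτ ▸ hs) x hx
  rw [← integral_integral_intervalIntegral_mul_eq_intervalIntegral_sq hK hτ
    (continuousOn_uncurry_inv_one_add_mul hφ hpos)]
  refine setIntegral_congr_fun hK.measurableSet fun x hx => ?_
  refine setIntegral_congr_fun hK.measurableSet fun y hy => ?_
  simp only [logKernel_eq_intervalIntegral fun s hs => ⟨hpos' x hx s hs, hpos' y hy s hs⟩, mul_inv]

theorem hasDerivWithinAt_integral_integral_logKernel [SecondCountableTopology X] [SFinite μ]
    (hK : IsCompact K) (hφ : ContinuousOn φ K) {a b τ : ℝ} (ha : a < 0)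
    (hpos : ∀ s ∈ Ioo a b, ∀ x ∈ K, 0 < 1 + s * φ x) (hτ : τ ∈ Ico 0 b) :
    HasDerivWithinAt (fun τ => ∫ x in K, (∫ y in K, logKernel (φ x) (φ y) τ ∂μ) ∂μ)
      ((∫ x in K, (1 + τ * φ x)⁻¹ ∂μ) ^ 2) (Ico 0 b) τ := by
  -- `a < 0` puts `[0, b)` inside the open interval `Ioo a b`, where FTC gives `HasDerivAt`
  have hIco : Ico 0 b ⊆ Ioo a b := Ico_subset_Ioo_left ha
  have hS : ContinuousOn (fun s => ∫ x in K, (1 + s * φ x)⁻¹ ∂μ) (Ioo a b) :=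
    continuousOn_parametric_integral_of_continuousOn (f := fun s x => (1 + s * φ x)⁻¹)
      isOpen_Ioo hK (continuousOn_uncurry_inv_one_add_mul hφ hpos)
  have hG := hasDerivAt_intervalIntegral_of_continuousOn isOpen_Ioo ordConnected_Ioo
    (hIco ⟨le_rfl, hτ.1.trans_lt hτ.2⟩) (hIco hτ) (hS.pow 2)
  have hGT : ∀ s ∈ Ico 0 b, ∫ x in K, (∫ y in K, logKernel (φ x) (φ y) s ∂μ) ∂μ
      = ∫ s' in (0:ℝ)..s, (∫ x in K, (1 + s' * φ x)⁻¹ ∂μ) ^ 2 := fun s hs =>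
    integral_integral_logKernel_eq hK hφ hs.1 fun s' hs' =>
      hpos s' (hIco ⟨hs'.1, hs'.2.trans_lt hs.2⟩)
  exact hG.hasDerivWithinAt.congr hGT (hGT τ hτ)

end

theorem HasDerivWithinAt.of_local_left_inverse {𝕜 : Type*} [NontriviallyNormedField 𝕜]
    {f g : 𝕜 → 𝕜} {f' a : 𝕜} {s t : Set 𝕜}
    (hg : Tendsto g (𝓝[s] a) (𝓝[t] (g a))) (hf : HasDerivWithinAt f f' t (g a)) (hf' : f' ≠ 0)
    (ha : a ∈ s) (hfg : ∀ᶠ y in 𝓝[s] a, f (g y) = y) : HasDerivWithinAt g f'⁻¹ s a :=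
  HasFDerivWithinAt.of_local_left_inverse
    (f' := ContinuousLinearEquiv.unitsEquivAut 𝕜 (Units.mk0 f' hf')) hg hf ha hfg

section LeftInverse

variable {α β : Type*} [LinearOrder α] [TopologicalSpace α] [OrderTopology α]
  [LinearOrder β] [TopologicalSpace β] [OrderTopology β]
  {f : α → β} {g : β → α} {s : Set α} {t : Set β} {b : β}

theorem StrictMonoOn.continuousWithinAt_of_leftInvOn (hf : StrictMonoOn f s)
    (hs : s.OrdConnected) (hg : MapsTo g t s) (hfg : LeftInvOn f g t) (hb : b ∈ t) :
    ContinuousWithinAt g t b := by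
  rw [ContinuousWithinAt, tendsto_order]
  constructor
  · intro a ha
    by_cases has : a ∈ s
    · have : f a < b := by rw [← hfg hb]; exact hf.lt_iff_lt has (hg hb) |>.2 ha
      filter_upwards [nhdsWithin_le_nhds (Ioi_mem_nhds this), self_mem_nhdsWithin] with y hy hyt
      rw [← hf.lt_iff_lt has (hg hyt), hfg hyt]
      exact hy
    · filter_upwards [self_mem_nhdsWithin] with y hyt
      by_contra! hle
      exact has (hs.out (hg hyt) (hg hb) ⟨hle, ha.le⟩)
  · intro a ha
    by_cases has : a ∈ s
    · have : b < f a := by rw [← hfg hb]; exact hf.lt_iff_lt (hg hb) has |>.2 ha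
      filter_upwards [nhdsWithin_le_nhds (Iio_mem_nhds this), self_mem_nhdsWithin] with y hy hyt
      rw [← hf.lt_iff_lt (hg hyt) has, hfg hyt]
      exact hy
    · filter_upwards [self_mem_nhdsWithin] with y hyt
      by_contra! hle
      exact has (hs.out (hg hb) (hg hyt) ⟨ha.le, hle⟩)

end LeftInverse

theorem StrictMonoOn.image_Ico_eq {f : ℝ → ℝ} {a b : ℝ} (hf : StrictMonoOn f (Ico a b))
    (hfc : ContinuousOn f (Ico a b)) :
    f '' Ico a b = {y | f a ≤ y ∧ (y : EReal) < sSup ((fun x => (f x : EReal)) '' Ico a b)} := by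
  ext y
  constructor
  · rintro ⟨x, hx, rfl⟩
    have hmid : (x + b) / 2 ∈ Ico a b := ⟨by linarith [hx.1, hx.2], by linarith [hx.2]⟩
    refine ⟨hf.monotoneOn ⟨le_rfl, hx.1.trans_lt hx.2⟩ hx hx.1, ?_⟩
    calc (f x : EReal) < f ((x + b) / 2) := EReal.coe_lt_coe_iff.2 (hf hx hmid (by linarith [hx.2]))
      _ ≤ _ := le_sSup (mem_image_of_mem (fun x => (f x : EReal)) hmid)
  · rintro ⟨hay, hy⟩
    obtain ⟨_, ⟨x, hx, rfl⟩, hyx⟩ := lt_sSup_iff.1 hy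
    have hsub : Icc a x ⊆ Ico a b := fun z hz => ⟨hz.1, hz.2.trans_lt hx.2⟩
    obtain ⟨z, hz, rfl⟩ := intermediate_value_Icc hx.1 (hfc.mono hsub)
      ⟨hay, (EReal.coe_lt_coe_iff.1 hyx).le⟩
    exact mem_image_of_mem f (hsub hz)

theorem StrictMonoOn.hasDerivWithinAt_of_leftInvOn {f g : ℝ → ℝ} {s t : Set ℝ} {b f' : ℝ}
    (hf : StrictMonoOn f s) (hs : s.OrdConnected) (hg : MapsTo g t s) (hfg : LeftInvOn f g t)
    (hb : b ∈ t) (hf' : HasDerivWithinAt f f' s (g b)) (hf'0 : f' ≠ 0) :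
    HasDerivWithinAt g f'⁻¹ t b :=
  hf'.of_local_left_inverse (tendsto_nhdsWithin_iff.2
    ⟨hf.continuousWithinAt_of_leftInvOn hs hg hfg hb, eventually_nhdsWithin_of_forall hg⟩)
    hf'0 hb (eventually_nhdsWithin_of_forall hfg)

theorem stmt_5_general
    (L : ℝ) (hL : 0 < L)
    (Q : Set (ℝ × ℝ)) (hQ : Q = Set.Icc (0, 0) (L, L))
    (φ₀ : ℝ × ℝ → ℝ) (hφcont : ContinuousOn φ₀ Q)
    (m₀ : ℝ) (hmin : ∀ a ∈ Q, m₀ ≤ φ₀ a)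
    (hm₀ : m₀ < 0)
    (τstar : ℝ) (hτstar : τstar = -1 / m₀)
    (F α : ℝ → ℝ)
    (hF : ∀ τ ∈ Set.Ico 0 τstar, F τ = (1 / L ^ 2) * ∫ a in Q, 1 / (1 + τ * φ₀ a))
    (hα : ∀ τ ∈ Set.Ico 0 τstar, α τ = ((F τ) ^ 2)⁻¹)
    (T : ℝ → ℝ)
    (hT : ∀ τ ∈ Set.Ico 0 τstar,
      T τ = (1 / L ^ 4) * ∫ a in Q, ∫ b in Q,
        (if φ₀ a ≠ φ₀ b then
          Real.log ((1 + τ * φ₀ a) / (1 + τ * φ₀ b)) / (φ₀ a - φ₀ b)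
        else τ / (1 + τ * φ₀ a)))
    (Tstar : EReal)
    (hTstar : Tstar = sSup ((fun τ => ((T τ : ℝ) : EReal)) '' Set.Ico 0 τstar))
    (D : Set ℝ) (hD : D = {t : ℝ | 0 ≤ t ∧ (t : EReal) < Tstar}) :
    0 < Tstar ∧
    StrictMonoOn T (Set.Ico 0 τstar) ∧
    ContinuousOn T (Set.Ico 0 τstar) ∧
    T '' Set.Ico 0 τstar = D ∧
    ∀ τinv : ℝ → ℝ,
      (∀ t ∈ D, τinv t ∈ Set.Ico 0 τstar ∧ T (τinv t) = t) →
      τinv 0 = 0 ∧ ∀ t ∈ D, HasDerivWithinAt τinv (α (τinv t)) D t := by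
  have hQc : IsCompact Q := hQ ▸ isCompact_Icc
  have hvol : volume Q ≠ 0 := by
    rw [hQ, Icc_prod_eq, Measure.volume_eq_prod, Measure.prod_prod, Real.volume_Icc]
    simp [hL]
  replace hτstar : τstar = -m₀⁻¹ := by rw [hτstar, neg_div, one_div]
  have hτstar0 : 0 < τstar := hτstar ▸ neg_pos.2 (inv_lt_zero.2 hm₀)
  obtain ⟨δ, hδ, hpos⟩ := exists_neg_forall_one_add_mul_pos hQc hφcont hm₀ hmin
  rw [← hτstar] at hpos
  have hT' : ∀ τ ∈ Ico 0 τstar, HasDerivWithinAt T (F τ ^ 2) (Ico 0 τstar) τ := fun τ hτ => by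
    have := (hasDerivWithinAt_integral_integral_logKernel (μ := volume) hQc hφcont hδ hpos
      hτ).const_mul (1 / L ^ 4)
    refine (this.congr (fun s hs => hT s hs) (hT τ hτ)).congr_deriv ?_
    simp only [hF τ hτ, one_div]
    ring
  have hFpos : ∀ τ ∈ Ico 0 τstar, 0 < F τ ^ 2 := fun τ hτ => by
    have := integral_inv_one_add_mul_pos hQc hφcont hvol (hpos τ (Ico_subset_Ioo_left hδ hτ))
    rw [hF τ hτ]
    simp only [one_div] at this ⊢
    positivity
  have hT0 : T 0 = 0 := by simp [hT 0 ⟨le_rfl, hτstar0⟩]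
  have hcont : ContinuousOn T (Ico 0 τstar) := fun τ hτ => (hT' τ hτ).continuousWithinAt
  have hmono : StrictMonoOn T (Ico 0 τstar) :=
    strictMonoOn_of_hasDerivWithinAt_pos (convex_Ico 0 τstar) hcont
      (fun τ hτ => (hT' τ (interior_subset hτ)).mono interior_subset)
      fun τ hτ => hFpos τ (interior_subset hτ)
  have himage : T '' Ico 0 τstar = D := by
    rw [hmono.image_Ico_eq hcont, hT0, hD, hTstar]
  have h0D : (0 : ℝ) ∈ D := himage ▸ ⟨0, ⟨le_rfl, hτstar0⟩, hT0⟩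
  refine ⟨by simpa using (hD ▸ h0D).2, hmono, hcont, himage, fun τinv hinv => ⟨?_, fun t ht => ?_⟩⟩
  · exact hmono.injOn (hinv 0 h0D).1 ⟨le_rfl, hτstar0⟩ (by rw [(hinv 0 h0D).2, hT0])
  · rw [hα _ (hinv t ht).1]
    exact hmono.hasDerivWithinAt_of_leftInvOn ordConnected_Ico (fun t ht => (hinv t ht).1)
      (fun t ht => (hinv t ht).2) ht (hT' _ (hinv t ht).1) (hFpos _ (hinv t ht).1).ne'

/-- `T` is a strictly increasing continuous bijection from `[0,τ*)` onto
`[0,T*)`, `T* = sup_{τ∈[0,τ*)} T(τ) ∈ (0,∞]`, and its inverse `τ : [0,T*) → [0,τ*)` is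
differentiable with `τ(0) = 0` and `τ'(t) = α(τ(t))`. -/
theorem stmt_5
    (L : ℝ) (hL : 0 < L)
    (Q : Set (ℝ × ℝ)) (hQ : Q = Set.Icc (0, 0) (L, L))
    (φ₀ : ℝ × ℝ → ℝ) (hφcont : ContinuousOn φ₀ Q)
    (hmean : ∫ a in Q, φ₀ a = 0)
    (m₀ : ℝ) (hmin : ∀ a ∈ Q, m₀ ≤ φ₀ a) (hatt : ∃ a ∈ Q, φ₀ a = m₀)
    (hm₀ : m₀ < 0)
    (τstar : ℝ) (hτstar : τstar = -1 / m₀)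
    (F α : ℝ → ℝ)
    (hF : ∀ τ ∈ Set.Ico 0 τstar, F τ = (1 / L ^ 2) * ∫ a in Q, 1 / (1 + τ * φ₀ a))
    (hα : ∀ τ ∈ Set.Ico 0 τstar, α τ = ((F τ) ^ 2)⁻¹)
    (T : ℝ → ℝ)
    (hT : ∀ τ ∈ Set.Ico 0 τstar,
      T τ = (1 / L ^ 4) * ∫ a in Q, ∫ b in Q,
        (if φ₀ a ≠ φ₀ b then
          Real.log ((1 + τ * φ₀ a) / (1 + τ * φ₀ b)) / (φ₀ a - φ₀ b)
        else τ / (1 + τ * φ₀ a)))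
    (Tstar : EReal)
    (hTstar : Tstar = sSup ((fun τ => ((T τ : ℝ) : EReal)) '' Set.Ico 0 τstar))
    (D : Set ℝ) (hD : D = {t : ℝ | 0 ≤ t ∧ (t : EReal) < Tstar}) :
    0 < Tstar ∧
    StrictMonoOn T (Set.Ico 0 τstar) ∧
    ContinuousOn T (Set.Ico 0 τstar) ∧
    T '' Set.Ico 0 τstar = D ∧
    ∀ τinv : ℝ → ℝ,
      (∀ t ∈ D, τinv t ∈ Set.Ico 0 τstar ∧ T (τinv t) = t) →
      τinv 0 = 0 ∧ ∀ t ∈ D, HasDerivWithinAt τinv (α (τinv t)) D t :=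
  stmt_5_general L hL Q hQ φ₀ hφcont m₀ hmin hm₀ τstar hτstar F α hF hα T hT Tstar hTstar D hD
end

section
/- If φ₀ is nondegenerate, then the blow-up time T* := lim_{τ→τ*⁻} T(τ) is finite and is given by T* = (1/|Q|²) ∫_Q ∫_Q K(a,b) da db, where K(a,b) = log((φ₀(a)−m₀)/(φ₀(b)−m₀))/(φ₀(a)−φ₀(b)) if φ₀(a) ≠ φ₀(b) and K(a,b) = 1/(φ₀(a)−m₀) if φ₀(a) = φ₀(b); in particular this double integral is finite. -/
open MeasureTheory Real Set Filter

/-- `φ₀` is nondegenerate on `Q`: its minimum `m₀` is attained at finitely many points, all in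
the open interior of `Q`, and near each minimum point `φ₀ − m₀` is comparable to the squared
distance to that point. -/
def Nondegenerate (Q : Set (ℝ × ℝ)) (φ₀ : ℝ × ℝ → ℝ) (m₀ : ℝ) : Prop :=
  ∃ S : Finset (ℝ × ℝ),
    (↑S : Set (ℝ × ℝ)) = {a ∈ Q | φ₀ a = m₀} ∧
    (↑S : Set (ℝ × ℝ)) ⊆ interior Q ∧
    ∃ r > (0 : ℝ), ∃ c₁ c₂ : ℝ, 0 < c₁ ∧ c₁ ≤ c₂ ∧
      ∀ aᵢ ∈ S, ∀ a ∈ Q, ‖a - aᵢ‖ ≤ r →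
        c₁ * ‖a - aᵢ‖ ^ 2 ≤ φ₀ a - m₀ ∧ φ₀ a - m₀ ≤ c₂ * ‖a - aᵢ‖ ^ 2

open Topology

/-!
Both kernels are values of `invLogMean`, the reciprocal of the logarithmic mean:
`K a b = invLogMean (φ₀ a - m₀) (φ₀ b - m₀)`, and the kernel of `T τ` is
`τ * invLogMean (1 + τ φ₀ a) (1 + τ φ₀ b)`, which tends to `K a b` as `τ → τ*` because
`1 + τ* φ₀ = τ* (φ₀ - m₀)`. Since `1 + τ m₀ ≥ 0`, we have `1 + τ φ₀ ≥ τ (φ₀ - m₀)`, and the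
logarithmic mean dominates the geometric mean, so all these kernels are bounded by
`(φ₀ a - m₀)^(-1/2) (φ₀ b - m₀)^(-1/2)`. Nondegeneracy makes `(φ₀ - m₀)^(-1/2)` at most a multiple
of `|a - aᵢ|⁻¹` near each minimum point, which is integrable in dimension two; dominated
convergence concludes.
-/

noncomputable def invLogMean (x y : ℝ) : ℝ := if x ≠ y then log (x / y) / (x - y) else x⁻¹

theorem invLogMean_comm (x y : ℝ) : invLogMean x y = invLogMean y x := by
  unfold invLogMean
  rcases eq_or_ne x y with rfl | h
  · rfl
  · rw [if_pos h, if_pos h.symm, ← inv_div y x, Real.log_inv, neg_div, ← div_neg, neg_sub]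

theorem invLogMean_mul_mul {c : ℝ} (hc : c ≠ 0) (x y : ℝ) :
    invLogMean (c * x) (c * y) = c⁻¹ * invLogMean x y := by
  unfold invLogMean
  rcases eq_or_ne x y with rfl | h
  · simp [mul_comm]
  · rw [if_pos (by simpa [hc] using h), if_pos h, mul_div_mul_left _ _ hc, ← mul_sub,
      mul_comm c, ← div_div, div_eq_inv_mul _ c]

theorem inv_max_le_invLogMean {x y : ℝ} (hx : 0 < x) (hy : 0 < y) :
    (max x y)⁻¹ ≤ invLogMean x y := by
  wlog hxy : y ≤ x generalizing x y
  · rw [max_comm, invLogMean_comm]; exact this hy hx (le_of_not_ge hxy)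
  rw [max_eq_left hxy]
  rcases hxy.eq_or_lt with rfl | hlt
  · simp [invLogMean]
  rw [invLogMean, if_pos hlt.ne', le_div_iff₀ (sub_pos.2 hlt)]
  calc x⁻¹ * (x - y) = 1 - (x / y)⁻¹ := by field_simp
    _ ≤ log (x / y) := one_sub_inv_le_log_of_pos (by positivity)

theorem invLogMean_pos {x y : ℝ} (hx : 0 < x) (hy : 0 < y) : 0 < invLogMean x y :=
  (inv_pos.2 (lt_max_of_lt_left hx)).trans_le (inv_max_le_invLogMean hx hy)

/-- The logarithmic mean dominates the geometric one: `u ≤ sinh u` at `u = log √(x / y)`. -/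
theorem invLogMean_le_inv_sqrt_mul_sqrt {x y : ℝ} (hx : 0 < x) (hy : 0 < y) :
    invLogMean x y ≤ (√x * √y)⁻¹ := by
  wlog hxy : y < x generalizing x y
  · rcases (not_lt.1 hxy).eq_or_lt with rfl | hlt
    · simp [invLogMean, ← sqrt_mul hx.le, sqrt_mul_self hx.le]
    · rw [invLogMean_comm, mul_comm]; exact this hy hx hlt
  obtain ⟨a, ha, rfl⟩ : ∃ a, 0 < a ∧ a ^ 2 = x := ⟨√x, sqrt_pos.2 hx, sq_sqrt hx.le⟩
  obtain ⟨b, hb, rfl⟩ : ∃ b, 0 < b ∧ b ^ 2 = y := ⟨√y, sqrt_pos.2 hy, sq_sqrt hy.le⟩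
  have hab : b < a := by nlinarith
  have hsinh : log (a / b) ≤ (a / b - b / a) / 2 := by
    have := (self_le_sinh_iff (x := log (a / b))).2 (log_nonneg ((one_le_div hb).2 hab.le))
    rwa [sinh_eq, exp_neg, exp_log (by positivity), inv_div] at this
  rw [sqrt_sq ha.le, sqrt_sq hb.le, invLogMean, if_pos hxy.ne', ← div_pow, log_pow,
    div_le_iff₀ (by nlinarith)]
  calc (2 : ℕ) * log (a / b) ≤ a / b - b / a := by push_cast; linarith
    _ = (a * b)⁻¹ * (a ^ 2 - b ^ 2) := by field_simp

theorem continuousAt_invLogMean {p : ℝ × ℝ} (hx : 0 < p.1) (hy : 0 < p.2) :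
    ContinuousAt (fun q : ℝ × ℝ => invLogMean q.1 q.2) p := by
  rcases ne_or_eq p.1 p.2 with h | h
  · have hc : ContinuousAt (fun q : ℝ × ℝ => log (q.1 / q.2) / (q.1 - q.2)) p :=
      ((continuousAt_fst.div continuousAt_snd hy.ne').log (div_pos hx hy).ne').div
        (continuousAt_fst.sub continuousAt_snd) (sub_ne_zero.2 h)
    refine hc.congr ?_
    filter_upwards [(isOpen_ne_fun continuous_fst continuous_snd).mem_nhds h] with q hq
    rw [invLogMean, if_pos hq]
  · have hpos : ∀ᶠ q : ℝ × ℝ in 𝓝 p, 0 < q.1 ∧ 0 < q.2 :=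
      (continuousAt_fst.eventually (lt_mem_nhds hx)).and
        (continuousAt_snd.eventually (lt_mem_nhds hy))
    have hlow : ContinuousAt (fun q : ℝ × ℝ => (max q.1 q.2)⁻¹) p :=
      (continuousAt_fst.max continuousAt_snd).inv₀ (lt_max_of_lt_left hx).ne'
    have hupp : ContinuousAt (fun q : ℝ × ℝ => (√q.1 * √q.2)⁻¹) p :=
      ((continuous_sqrt.continuousAt.comp continuousAt_fst).mul
        (continuous_sqrt.continuousAt.comp continuousAt_snd)).inv₀
        (mul_pos (sqrt_pos.2 hx) (sqrt_pos.2 hy)).ne'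
    have hval : invLogMean p.1 p.2 = p.1⁻¹ := by simp [invLogMean, h]
    rw [ContinuousAt, hval]
    refine tendsto_of_tendsto_of_tendsto_of_le_of_le' ?_ ?_
      (hpos.mono fun q hq => inv_max_le_invLogMean hq.1 hq.2)
      (hpos.mono fun q hq => invLogMean_le_inv_sqrt_mul_sqrt hq.1 hq.2)
    · simpa [← h] using hlow.tendsto
    · have hsq : (√p.1 * √p.2)⁻¹ = p.1⁻¹ := by rw [← h, mul_self_sqrt hx.le]
      simpa only [ContinuousAt, hsq] using hupp

theorem ite_log_div_eq_mul_invLogMean (τ x y : ℝ) :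
    (if x ≠ y then log ((1 + τ * x) / (1 + τ * y)) / (x - y) else τ / (1 + τ * x)) =
      τ * invLogMean (1 + τ * x) (1 + τ * y) := by
  rcases eq_or_ne τ 0 with rfl | hτ
  · split_ifs <;> simp
  rcases eq_or_ne x y with rfl | h
  · simp [invLogMean, div_eq_mul_inv]
  have hτxy : 1 + τ * x ≠ 1 + τ * y := by simpa [hτ] using h
  rw [if_pos h, invLogMean, if_pos hτxy, show 1 + τ * x - (1 + τ * y) = τ * (x - y) by ring]
  field_simp

theorem ite_log_div_eq_invLogMean (m x y : ℝ) :
    (if x ≠ y then log ((x - m) / (y - m)) / (x - y) else 1 / (x - m)) =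
      invLogMean (x - m) (y - m) := by
  rcases eq_or_ne x y with rfl | h
  · simp [invLogMean]
  rw [if_pos h, invLogMean, if_pos (by simpa using h), sub_sub_sub_cancel_right]

theorem mul_invLogMean_le {τ u v X Y : ℝ} (hτ : 0 ≤ τ) (hu : 0 < u) (hv : 0 < v)
    (huX : τ * u ≤ X) (hvY : τ * v ≤ Y) :
    τ * invLogMean X Y ≤ (√u)⁻¹ * (√v)⁻¹ := by
  rcases hτ.eq_or_lt with rfl | hτ
  · simp only [zero_mul]; positivity
  have hX : 0 < X := (mul_pos hτ hu).trans_le huX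
  have hY : 0 < Y := (mul_pos hτ hv).trans_le hvY
  calc τ * invLogMean X Y ≤ τ * (√X * √Y)⁻¹ :=
        mul_le_mul_of_nonneg_left (invLogMean_le_inv_sqrt_mul_sqrt hX hY) hτ.le
    _ ≤ τ * (√(τ * u) * √(τ * v))⁻¹ := by gcongr
    _ = (√u)⁻¹ * (√v)⁻¹ := by
      rw [sqrt_mul hτ.le, sqrt_mul hτ.le]
      field_simp
      rw [sq_sqrt hτ.le]

theorem tendsto_mul_invLogMean {m x y : ℝ} (hm : m < 0) (hx : m < x) (hy : m < y) :
    Tendsto (fun τ => τ * invLogMean (1 + τ * x) (1 + τ * y)) (𝓝 (-1 / m))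
      (𝓝 (invLogMean (x - m) (y - m))) := by
  have hm0 : m ≠ 0 := hm.ne
  have hτ : -1 / m ≠ 0 := by simp [hm0]
  have hscale : ∀ z, 1 + -1 / m * z = -1 / m * (z - m) := fun z => by field_simp; ring
  have hlim : invLogMean (x - m) (y - m) =
      -1 / m * invLogMean (1 + -1 / m * x) (1 + -1 / m * y) := by
    rw [hscale, hscale, invLogMean_mul_mul hτ, mul_inv_cancel_left₀ hτ]
  rw [hlim]
  refine tendsto_id.mul ((continuousAt_invLogMean ?_ ?_).tendsto.comp
    (Continuous.tendsto (f := fun τ : ℝ => (1 + τ * x, 1 + τ * y)) ?_ _))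
  · exact (hscale x).symm ▸ mul_pos (div_pos_of_neg_of_neg (by norm_num) hm) (sub_pos.2 hx)
  · exact (hscale y).symm ▸ mul_pos (div_pos_of_neg_of_neg (by norm_num) hm) (sub_pos.2 hy)
  · fun_prop

section InvSqrt

variable {E : Type*} [NormedAddCommGroup E] [NormedSpace ℝ E] [FiniteDimensional ℝ E]
  [MeasurableSpace E] [BorelSpace E] {μ : Measure E} [μ.IsAddHaarMeasure]

theorem integrableOn_ball_inv_norm_sub (hd : 2 ≤ Module.finrank ℝ E) (c : E) (r : ℝ) :
    IntegrableOn (fun x => ‖x - c‖⁻¹) (Metric.ball c r) μ := by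
  have h0 : IntegrableOn (fun x : E => ‖x‖⁻¹) (Metric.ball 0 r) μ :=
    integrableOn_ball_of_norm_le_rpow (C := 1) (α := 1) (by omega) (by exact_mod_cast hd)
      (ae_of_all _ fun x => by simp [rpow_neg_one])
      continuous_norm.measurable.inv.aestronglyMeasurable
  rw [← (measurePreserving_add_right μ c).integrableOn_comp_preimage
    (measurableEmbedding_addRight c), Metric.preimage_add_right_ball, sub_self]
  simpa [Function.comp_def] using h0

theorem integrableOn_inv_sqrt_of_sq_le (hd : 2 ≤ Module.finrank ℝ E) {Q : Set E}
    (hQ : IsCompact Q) {f : E → ℝ} (hf : ContinuousOn f Q) (S : Finset E)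
    (hpos : ∀ a ∈ Q, a ∉ S → 0 < f a) {r c : ℝ} (hr : 0 < r) (hc : 0 < c)
    (hsq : ∀ i ∈ S, ∀ a ∈ Q, ‖a - i‖ ≤ r → c * ‖a - i‖ ^ 2 ≤ f a) :
    IntegrableOn (fun a => (√(f a))⁻¹) Q μ := by
  set U := ⋃ i ∈ S, Metric.ball i r
  have h_far : IntegrableOn (fun a => (√(f a))⁻¹) (Q \ U) μ := by
    refine ((hf.mono sdiff_subset).sqrt.inv₀ fun a ha => ?_).integrableOn_compact
      (hQ.diff (isOpen_biUnion fun i _ => Metric.isOpen_ball))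
    refine (sqrt_pos.2 (hpos a ha.1 fun haS => ha.2 ?_)).ne'
    exact mem_biUnion haS (Metric.mem_ball_self hr)
  have h_near : ∀ i ∈ S, IntegrableOn (fun a => (√(f a))⁻¹) (Q ∩ Metric.ball i r) μ := by
    intro i hi
    have hball : IntegrableOn (fun a => (√c)⁻¹ * ‖a - i‖⁻¹) (Metric.ball i r) μ :=
      (integrableOn_ball_inv_norm_sub hd i r).const_mul _
    have hQB : MeasurableSet (Q ∩ Metric.ball i r) :=
      hQ.isClosed.measurableSet.inter Metric.isOpen_ball.measurableSet
    have hmeas : AEStronglyMeasurable (fun a => (√(f a))⁻¹) (μ.restrict (Q ∩ Metric.ball i r)) :=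
      ((hf.mono inter_subset_left).sqrt.aemeasurable hQB).inv.aestronglyMeasurable
    refine (hball.mono_set inter_subset_right).mono' hmeas ?_
    have : Nontrivial E := Module.nontrivial_of_finrank_pos (R := ℝ) (by omega)
    filter_upwards [ae_restrict_mem hQB,
      ae_restrict_of_ae ((countable_singleton i).ae_notMem μ)] with a ⟨haQ, haB⟩ hai
    have hdist : 0 < ‖a - i‖ := norm_pos_iff.2 (sub_ne_zero.2 hai)
    have hle : √c * ‖a - i‖ ≤ √(f a) := by
      rw [← sqrt_sq hdist.le, ← sqrt_mul hc.le]
      exact sqrt_le_sqrt (hsq i hi a haQ (mem_ball_iff_norm.1 haB).le)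
    rw [norm_inv, norm_of_nonneg (sqrt_nonneg _), ← mul_inv]
    exact inv_anti₀ (by positivity) hle
  have hcover : Q ⊆ (Q \ U) ∪ ⋃ i ∈ S, (Q ∩ Metric.ball i r) := by
    intro a ha
    by_cases h : a ∈ U
    · obtain ⟨i, hi, hai⟩ := mem_iUnion₂.1 h
      exact Or.inr (mem_iUnion₂.2 ⟨i, hi, ha, hai⟩)
    · exact Or.inl ⟨ha, h⟩
  exact (h_far.union ((integrableOn_finset_iUnion).2 h_near)).mono_set hcover

end InvSqrt

theorem measurable_invLogMean : Measurable (fun p : ℝ × ℝ => invLogMean p.1 p.2) := by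
  unfold invLogMean
  exact Measurable.ite (measurableSet_eq_fun measurable_fst measurable_snd).compl
    ((measurable_fst.div measurable_snd).log.div (measurable_fst.sub measurable_snd))
    measurable_fst.inv

section LogMeanKernel

variable {α : Type*} [MeasurableSpace α] {μ : Measure α} {φ : α → ℝ} {m : ℝ}

theorem ae_prod_lt_of_ae_lt (hpos : ∀ᵐ a ∂μ, m < φ a) :
    ∀ᵐ p ∂μ.prod μ, m < φ p.1 ∧ m < φ p.2 :=
  (Measure.quasiMeasurePreserving_fst.ae hpos).and (Measure.quasiMeasurePreserving_snd.ae hpos)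

theorem integrable_invLogMean_sub (hφ : AEMeasurable φ μ) (hpos : ∀ᵐ a ∂μ, m < φ a)
    (hg : Integrable (fun a => (√(φ a - m))⁻¹) μ) :
    Integrable (fun p : α × α => invLogMean (φ p.1 - m) (φ p.2 - m)) (μ.prod μ) := by
  refine (hg.mul_prod hg).mono' (measurable_invLogMean.comp_aemeasurable
    ((hφ.comp_fst.sub_const m).prodMk (hφ.comp_snd.sub_const m))).aestronglyMeasurable ?_
  filter_upwards [ae_prod_lt_of_ae_lt hpos] with p ⟨h1, h2⟩
  rw [norm_of_nonneg (invLogMean_pos (sub_pos.2 h1) (sub_pos.2 h2)).le, ← mul_inv]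
  exact invLogMean_le_inv_sqrt_mul_sqrt (sub_pos.2 h1) (sub_pos.2 h2)

theorem norm_mul_invLogMean_le {τ : ℝ} (hm : m < 0) (hτ : τ ∈ Ico 0 (-1 / m)) {x y : ℝ}
    (hx : m < x) (hy : m < y) :
    ‖τ * invLogMean (1 + τ * x) (1 + τ * y)‖ ≤ (√(x - m))⁻¹ * (√(y - m))⁻¹ := by
  have hτm : 0 < 1 + τ * m := by have := (lt_div_iff_of_neg hm).1 hτ.2; linarith
  have hbound : ∀ z, m < z → 0 < 1 + τ * z ∧ τ * (z - m) ≤ 1 + τ * z := fun z hz =>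
    ⟨by nlinarith [hτ.1], by nlinarith⟩
  obtain ⟨hX, hXle⟩ := hbound x hx
  obtain ⟨hY, hYle⟩ := hbound y hy
  rw [norm_of_nonneg (mul_nonneg hτ.1 (invLogMean_pos hX hY).le)]
  exact mul_invLogMean_le hτ.1 (sub_pos.2 hx) (sub_pos.2 hy) hXle hYle

theorem integrable_mul_invLogMean (hm : m < 0) {τ : ℝ} (hτ : τ ∈ Ico 0 (-1 / m))
    (hφ : AEMeasurable φ μ) (hpos : ∀ᵐ a ∂μ, m < φ a)
    (hg : Integrable (fun a => (√(φ a - m))⁻¹) μ) :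
    Integrable (fun p : α × α => τ * invLogMean (1 + τ * φ p.1) (1 + τ * φ p.2)) (μ.prod μ) := by
  have hX : AEMeasurable (fun a => 1 + τ * φ a) μ := (hφ.const_mul τ).const_add 1
  refine (hg.mul_prod hg).mono' ((measurable_invLogMean.comp_aemeasurable
    (hX.comp_fst.prodMk hX.comp_snd)).const_mul τ).aestronglyMeasurable ?_
  filter_upwards [ae_prod_lt_of_ae_lt hpos] with p ⟨h1, h2⟩
  exact norm_mul_invLogMean_le hm hτ h1 h2

theorem tendsto_integral_mul_invLogMean [SFinite μ] (hm : m < 0) (hφ : AEMeasurable φ μ)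
    (hpos : ∀ᵐ a ∂μ, m < φ a) (hg : Integrable (fun a => (√(φ a - m))⁻¹) μ) :
    Tendsto (fun τ => ∫ a, ∫ b, τ * invLogMean (1 + τ * φ a) (1 + τ * φ b) ∂μ ∂μ)
      (𝓝[<] (-1 / m)) (𝓝 (∫ a, ∫ b, invLogMean (φ a - m) (φ b - m) ∂μ ∂μ)) := by
  have hτ : ∀ᶠ τ in 𝓝[<] (-1 / m), τ ∈ Ico 0 (-1 / m) :=
    mem_of_superset (Ioo_mem_nhdsLT (div_pos_of_neg_of_neg (by norm_num) hm)) Ioo_subset_Ico_self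
  rw [integral_integral (integrable_invLogMean_sub hφ hpos hg)]
  refine (tendsto_integral_filter_of_dominated_convergence _
    (hτ.mono fun τ hτ => (integrable_mul_invLogMean hm hτ hφ hpos hg).aestronglyMeasurable)
    (hτ.mono fun τ hτ => ?_) (hg.mul_prod hg) ?_).congr' ?_
  · filter_upwards [ae_prod_lt_of_ae_lt hpos] with p ⟨h1, h2⟩
    exact norm_mul_invLogMean_le hm hτ h1 h2
  · filter_upwards [ae_prod_lt_of_ae_lt hpos] with p ⟨h1, h2⟩
    exact (tendsto_mul_invLogMean hm h1 h2).mono_left nhdsWithin_le_nhds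
  · filter_upwards [hτ] with τ hτ
    exact (integral_integral (f := fun a b => τ * invLogMean (1 + τ * φ a) (1 + τ * φ b))
      (integrable_mul_invLogMean hm hτ hφ hpos hg)).symm

end LogMeanKernel

theorem stmt_6_general
    (L : ℝ)
    (Q : Set (ℝ × ℝ)) (hQ : Q = Set.Icc (0, 0) (L, L))
    (φ₀ : ℝ × ℝ → ℝ) (hφcont : ContinuousOn φ₀ Q)
    (m₀ : ℝ) (hmin : ∀ a ∈ Q, m₀ ≤ φ₀ a)
    (hm₀ : m₀ < 0)
    (τstar : ℝ) (hτstar : τstar = -1 / m₀)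
    (T : ℝ → ℝ)
    (hT : ∀ τ ∈ Set.Ico 0 τstar,
      T τ = (1 / L ^ 4) * ∫ a in Q, ∫ b in Q,
        (if φ₀ a ≠ φ₀ b then
          Real.log ((1 + τ * φ₀ a) / (1 + τ * φ₀ b)) / (φ₀ a - φ₀ b)
        else τ / (1 + τ * φ₀ a)))
    (K : ℝ × ℝ → ℝ × ℝ → ℝ)
    (hK : ∀ a b, K a b =
      if φ₀ a ≠ φ₀ b then
        Real.log ((φ₀ a - m₀) / (φ₀ b - m₀)) / (φ₀ a - φ₀ b)
      else 1 / (φ₀ a - m₀))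
    (hnd : Nondegenerate Q φ₀ m₀) :
    IntegrableOn (fun p : (ℝ × ℝ) × (ℝ × ℝ) => K p.1 p.2) (Q ×ˢ Q) ∧
    Filter.Tendsto T (nhdsWithin τstar (Set.Ico 0 τstar))
      (nhds ((1 / L ^ 4) * ∫ a in Q, ∫ b in Q, K a b)) := by
  have hQc : IsCompact Q := hQ ▸ isCompact_Icc
  obtain ⟨S, hS, -, r, hr, c₁, c₂, hc₁, -, hsq⟩ := hnd
  have hpos : ∀ a ∈ Q, a ∉ S → m₀ < φ₀ a := fun a ha haS =>
    (hmin a ha).lt_of_ne fun h => haS (by rw [← Finset.mem_coe, hS]; exact ⟨ha, h.symm⟩)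
  have hg : IntegrableOn (fun a => (√(φ₀ a - m₀))⁻¹) Q :=
    integrableOn_inv_sqrt_of_sq_le (by simp) hQc (hφcont.sub continuousOn_const) S
      (fun a ha haS => sub_pos.2 (hpos a ha haS)) hr hc₁ fun i hi a ha h => (hsq i hi a ha h).1
  have hae : ∀ᵐ a ∂volume.restrict Q, m₀ < φ₀ a := by
    filter_upwards [ae_restrict_mem hQc.isClosed.measurableSet,
      ae_restrict_of_ae (S.countable_toSet.ae_notMem volume)] with a ha haS
    exact hpos a ha haS
  have hφ : AEMeasurable φ₀ (volume.restrict Q) :=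
    (hφcont.aestronglyMeasurable hQc.isClosed.measurableSet).aemeasurable
  obtain rfl : K = fun a b => invLogMean (φ₀ a - m₀) (φ₀ b - m₀) := by
    funext a b
    rw [hK, ite_log_div_eq_invLogMean]
  subst hτstar
  refine ⟨?_, ?_⟩
  · rw [IntegrableOn, Measure.volume_eq_prod, ← Measure.prod_restrict]
    exact integrable_invLogMean_sub hφ hae hg
  · refine (((tendsto_integral_mul_invLogMean hm₀ hφ hae hg).const_mul (1 / L ^ 4)).mono_left
      (nhdsWithin_mono _ Ico_subset_Iio_self)).congr' ?_
    filter_upwards [self_mem_nhdsWithin] with τ hτ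
    simp only [hT τ hτ, ite_log_div_eq_mul_invLogMean]

/-- If `φ₀` is nondegenerate then the blow-up time `T* = lim_{τ→τ*⁻} T(τ)` is
finite and equals `(1/|Q|²) ∫_Q ∫_Q K(a,b) da db`; in particular this double integral is
finite. -/
theorem stmt_6
    (L : ℝ) (hL : 0 < L)
    (Q : Set (ℝ × ℝ)) (hQ : Q = Set.Icc (0, 0) (L, L))
    (φ₀ : ℝ × ℝ → ℝ) (hφcont : ContinuousOn φ₀ Q)
    (hmean : ∫ a in Q, φ₀ a = 0)
    (m₀ : ℝ) (hmin : ∀ a ∈ Q, m₀ ≤ φ₀ a) (hatt : ∃ a ∈ Q, φ₀ a = m₀)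
    (hm₀ : m₀ < 0)
    (τstar : ℝ) (hτstar : τstar = -1 / m₀)
    (T : ℝ → ℝ)
    (hT : ∀ τ ∈ Set.Ico 0 τstar,
      T τ = (1 / L ^ 4) * ∫ a in Q, ∫ b in Q,
        (if φ₀ a ≠ φ₀ b then
          Real.log ((1 + τ * φ₀ a) / (1 + τ * φ₀ b)) / (φ₀ a - φ₀ b)
        else τ / (1 + τ * φ₀ a)))
    (K : ℝ × ℝ → ℝ × ℝ → ℝ)
    (hK : ∀ a b, K a b =
      if φ₀ a ≠ φ₀ b then
        Real.log ((φ₀ a - m₀) / (φ₀ b - m₀)) / (φ₀ a - φ₀ b)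
      else 1 / (φ₀ a - m₀))
    (hnd : Nondegenerate Q φ₀ m₀) :
    IntegrableOn (fun p : (ℝ × ℝ) × (ℝ × ℝ) => K p.1 p.2) (Q ×ˢ Q) ∧
    Filter.Tendsto T (nhdsWithin τstar (Set.Ico 0 τstar))
      (nhds ((1 / L ^ 4) * ∫ a in Q, ∫ b in Q, K a b)) :=
  stmt_6_general L Q hQ φ₀ hφcont m₀ hmin hm₀ τstar hτstar T hT K hK hnd
end

section
/- Assume lim_{τ→τ*⁻} F(τ) = +∞. If there exists a constant C > 0 such that α(τ)(φ₀(a)/(1+τφ₀(a)) − φ̄(τ)) ≤ C for all a ∈ Q and all τ ∈ [0,τ*), then α(τ) ≤ 2C(τ*−τ) for all τ ∈ [0,τ*) and ∫₀^{τ*} F(τ)² dτ = +∞; that is, the blow-up time in the original time variable is infinite, so there is no initial datum for which only the minimum of the solution diverges in finite time. -/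
/-! Since `φ₀` has zero mean on the connected square, it vanishes at some `a₀`, where the
hypothesis reads `-α φ̄ ≤ C`. Differentiating under the integral, `α = F⁻²` satisfies
`α' = 2 α φ̄ ≥ -2C`, and `α → 0` as `τ → τ*⁻` because `F → ∞`; integrating from `τ` to `τ*`
gives `α(τ) ≤ 2C(τ* - τ)`. Hence `F² = α⁻¹ ≥ (2C(τ* - τ))⁻¹`, which is not integrable at `τ*`. -/

open MeasureTheory Real Set Filter
open scoped ENNReal Topology

section CompactSet

variable {X : Type*} [TopologicalSpace X] [MeasurableSpace X] [OpensMeasurableSpace X]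
  {μ : Measure X} [IsFiniteMeasureOnCompacts μ] {s : Set X} {f : X → ℝ}

theorem IsCompact.setIntegral_pos_of_forall_pos (hs : IsCompact s) (hsm : MeasurableSet s)
    (hμs : μ s ≠ 0) (hf : ContinuousOn f s) (hpos : ∀ a ∈ s, 0 < f a) :
    0 < ∫ x in s, f x ∂μ := by
  rw [setIntegral_pos_iff_support_of_nonneg_ae
    (ae_restrict_of_forall_mem hsm fun a ha => (hpos a ha).le) (hf.integrableOn_compact' hs hsm)]
  exact (pos_iff_ne_zero.2 hμs).trans_le (measure_mono fun a ha => ⟨(hpos a ha).ne', ha⟩)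

theorem IsCompact.exists_nonpos_of_setIntegral_eq_zero (hs : IsCompact s)
    (hsm : MeasurableSet s) (hμs : μ s ≠ 0) (hf : ContinuousOn f s)
    (hint : ∫ x in s, f x ∂μ = 0) : ∃ a ∈ s, f a ≤ 0 := by
  obtain ⟨a, ha, hmin⟩ := hs.exists_isMinOn (nonempty_of_measure_ne_zero hμs) hf
  refine ⟨a, ha, not_lt.1 fun hpos => ?_⟩
  have hle := setIntegral_ge_of_const_le_real hsm hs.measure_ne_top hmin
    (hf.integrableOn_compact' (μ := μ) hs hsm)
  have hμpos : 0 < μ.real s := ENNReal.toReal_pos hμs hs.measure_ne_top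
  nlinarith

theorem IsCompact.exists_eq_zero_of_setIntegral_eq_zero (hs : IsCompact s)
    (hsm : MeasurableSet s) (hconn : IsPreconnected s) (hμs : μ s ≠ 0)
    (hf : ContinuousOn f s) (hint : ∫ x in s, f x ∂μ = 0) : ∃ a ∈ s, f a = 0 := by
  obtain ⟨a, ha, hfa⟩ := hs.exists_nonpos_of_setIntegral_eq_zero hsm hμs hf hint
  obtain ⟨b, hb, hfb⟩ := hs.exists_nonpos_of_setIntegral_eq_zero hsm hμs hf.neg
    (by simp [integral_neg, hint])
  exact hconn.intermediate_value ha hb hf ⟨hfa, neg_nonpos.1 hfb⟩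

theorem IsCompact.setIntegral_one_div_one_add_mul_pos {φ : X → ℝ} {τ : ℝ} (hs : IsCompact s)
    (hsm : MeasurableSet s) (hμs : μ s ≠ 0) (hφ : ContinuousOn φ s)
    (hpos : ∀ a ∈ s, 0 < 1 + τ * φ a) : 0 < ∫ a in s, 1 / (1 + τ * φ a) ∂μ :=
  hs.setIntegral_pos_of_forall_pos hsm hμs
    (continuousOn_const.div (continuousOn_const.add (continuousOn_const.mul hφ))
      fun a ha => (hpos a ha).ne')
    fun a ha => one_div_pos.2 (hpos a ha)

end CompactSet

theorem hasDerivAt_setIntegral_one_div_one_add_mul {X : Type*} [MeasurableSpace X]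
    {μ : Measure X} {s : Set X} {φ : X → ℝ} {M c τ₀ : ℝ} (hs : MeasurableSet s)
    (hμs : μ s ≠ ∞) (hφ : AEStronglyMeasurable φ (μ.restrict s)) (hM : ∀ a ∈ s, ‖φ a‖ ≤ M)
    (hc : 0 < c) (hτ₀ : ∀ a ∈ s, c ≤ 1 + τ₀ * φ a) :
    HasDerivAt (fun τ => ∫ a in s, 1 / (1 + τ * φ a) ∂μ)
      (-∫ a in s, φ a / (1 + τ₀ * φ a) ^ 2 ∂μ) τ₀ := by
  set U := {τ | ∀ a ∈ s, c / 2 ≤ 1 + τ * φ a}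
  have hU : U ∈ 𝓝 τ₀ := by
    have hsmall : ∀ᶠ τ in 𝓝 τ₀, |τ - τ₀| * M < c / 2 := by
      have : Tendsto (fun τ => |τ - τ₀| * M) (𝓝 τ₀) (𝓝 0) := by
        simpa using (by fun_prop : Continuous fun τ => |τ - τ₀| * M).tendsto τ₀
      exact this.eventually (gt_mem_nhds (half_pos hc))
    filter_upwards [hsmall] with τ hτ a ha
    have hdev : |(τ - τ₀) * φ a| ≤ |τ - τ₀| * M := by
      rw [abs_mul]
      exact mul_le_mul_of_nonneg_left (hM a ha) (abs_nonneg _)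
    have hsplit : 1 + τ * φ a = 1 + τ₀ * φ a + (τ - τ₀) * φ a := by ring
    linarith [neg_abs_le ((τ - τ₀) * φ a), hτ₀ a ha]
  have hpos : ∀ τ ∈ U, ∀ a ∈ s, 0 < 1 + τ * φ a := fun τ hτ a ha =>
    (half_pos hc).trans_le (hτ a ha)
  have hmeas : ∀ τ, AEStronglyMeasurable (fun a => 1 / (1 + τ * φ a)) (μ.restrict s) :=
    fun τ => (((hφ.aemeasurable.const_mul τ).const_add 1).const_div 1).aestronglyMeasurable
  have hres := hasDerivAt_integral_of_dominated_loc_of_deriv_le (μ := μ.restrict s)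
    (F' := fun τ a => -(φ a / (1 + τ * φ a) ^ 2)) (bound := fun _ => M / (c / 2) ^ 2) hU
    (Eventually.of_forall hmeas) (IntegrableOn.of_bound hμs.lt_top (hmeas τ₀) (1 / c) ?_)
    (hφ.aemeasurable.div
      (((hφ.aemeasurable.const_mul τ₀).const_add 1).pow_const 2)).neg.aestronglyMeasurable
    ?_ (integrableOn_const hμs) ?_
  · rw [integral_neg] at hres
    exact hres.2
  · refine ae_restrict_of_forall_mem hs fun a ha => ?_
    have hden := hτ₀ a ha
    rw [norm_of_nonneg (one_div_pos.2 (hc.trans_le hden)).le]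
    exact one_div_le_one_div_of_le hc hden
  · refine ae_restrict_of_forall_mem hs fun a ha τ hτ => ?_
    rw [norm_neg, norm_div, norm_pow, norm_eq_abs, norm_eq_abs, abs_of_pos (hpos τ hτ a ha)]
    exact div_le_div₀ ((abs_nonneg _).trans (hM a ha)) (hM a ha) (by positivity)
      (pow_le_pow_left₀ (half_pos hc).le (hτ a ha) 2)
  · refine ae_restrict_of_forall_mem hs fun a ha τ hτ => ?_
    have hlin : HasDerivAt (fun t => 1 + t * φ a) (φ a) τ := by
      simpa using ((hasDerivAt_id τ).mul_const (φ a)).const_add 1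
    simpa only [one_div, neg_div] using hlin.fun_inv (hpos τ hτ a ha).ne'

theorem one_add_mul_pos_of_mem_Ico {m τ : ℝ} (hm : m < 0) (hτ : τ ∈ Ico 0 (-1 / m)) :
    0 < 1 + τ * m := by
  have := (lt_div_iff_of_neg hm).1 hτ.2
  linarith

theorem le_mul_sub_of_hasDerivAt_of_tendsto {u u' : ℝ → ℝ} {a b K τ : ℝ}
    (hu : ∀ t ∈ Ico a b, HasDerivAt u (u' t) t) (hu' : ∀ t ∈ Ico a b, -K ≤ u' t)
    (hlim : Tendsto u (𝓝[<] b) (𝓝 0)) (hτ : τ ∈ Ico a b) : u τ ≤ K * (b - τ) := by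
  have hv : ∀ t ∈ Ico a b, HasDerivAt (fun t => u t + K * t) (u' t + K) t := fun t ht => by
    simpa using (hu t ht).fun_add ((hasDerivAt_id t).const_mul K)
  have hmono : MonotoneOn (fun t => u t + K * t) (Ico a b) := by
    refine monotoneOn_of_hasDerivWithinAt_nonneg (f' := fun t => u' t + K) (convex_Ico a b)
      (fun t ht => (hv t ht).continuousAt.continuousWithinAt) (fun t ht => ?_) (fun t ht => ?_)
    · rw [interior_Ico] at ht
      exact (hv t (Ioo_subset_Ico_self ht)).hasDerivWithinAt
    · rw [interior_Ico] at ht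
      linarith [hu' t (Ioo_subset_Ico_self ht)]
  have hlim' : Tendsto (fun t => u t + K * t) (𝓝[<] b) (𝓝 (K * b)) := by
    simpa using
      hlim.add ((continuous_const.mul continuous_id).tendsto b |>.mono_left nhdsWithin_le_nhds)
  have hle : u τ + K * τ ≤ K * b := ge_of_tendsto hlim' <| by
    filter_upwards [Ioo_mem_nhdsLT hτ.2] with t ht
    exact hmono hτ ⟨hτ.1.trans ht.1.le, ht.2⟩ ht.1.le
  linarith

/-- With `G' = -D`, the function `α = (k G)⁻²` satisfies `α' = 2 α (D / G)`. -/
theorem inv_sq_le_mul_sub_of_hasDerivAt {G D : ℝ → ℝ} {a b k C τ : ℝ} (hk : k ≠ 0)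
    (hG : ∀ t ∈ Ico a b, HasDerivAt G (-D t) t) (hG0 : ∀ t ∈ Ico a b, G t ≠ 0)
    (hD : ∀ t ∈ Ico a b, -C ≤ ((k * G t) ^ 2)⁻¹ * (D t / G t))
    (hlim : Tendsto (fun t => k * G t) (𝓝[<] b) atTop) (hτ : τ ∈ Ico a b) :
    ((k * G τ) ^ 2)⁻¹ ≤ 2 * C * (b - τ) := by
  refine le_mul_sub_of_hasDerivAt_of_tendsto
    (u' := fun t => 2 * ((k * G t) ^ 2)⁻¹ * (D t / G t)) (fun t ht => ?_)
    (fun t ht => by linarith [hD t ht])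
    (tendsto_inv_atTop_zero.comp ((tendsto_pow_atTop two_ne_zero).comp hlim)) hτ
  refine ((((hG t ht).const_mul k).fun_pow 2).fun_inv
    (pow_ne_zero 2 (mul_ne_zero hk (hG0 t ht)))).congr_deriv ?_
  have := hG0 t ht
  simp only [Nat.cast_ofNat, Nat.add_one_sub_one, pow_one]
  field_simp

theorem lintegral_Ico_inv_mul_sub_eq_top {a b c : ℝ} (hab : a < b) (hc : 0 < c) :
    ∫⁻ τ in Ico a b, ENNReal.ofReal ((c * (b - τ))⁻¹) = ∞ := by
  by_contra hfin
  rw [← ne_eq, lintegral_ofReal_ne_top_iff_integrable (by fun_prop) ?_] at hfin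
  · have hsub : IntervalIntegrable (fun τ => (τ - b)⁻¹) volume a b := by
      convert ((intervalIntegrable_iff_integrableOn_Ico_of_le hab.le).2 hfin).const_mul (-c)
        using 1
      ext τ
      rw [mul_inv, ← mul_assoc, neg_mul, mul_inv_cancel₀ hc.ne', neg_one_mul, ← inv_neg, neg_sub]
    simp [intervalIntegrable_sub_inv_iff, hab.ne, hab.le] at hsub
  · exact ae_restrict_of_forall_mem measurableSet_Ico fun τ hτ =>
      inv_nonneg.2 (mul_nonneg hc.le (sub_nonneg.2 hτ.2.le))

theorem lintegral_Ico_eq_top_of_inv_le_mul_sub {f : ℝ → ℝ} {a b c : ℝ} (hab : a < b)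
    (hc : 0 < c) (hf : ∀ τ ∈ Ico a b, 0 < f τ) (hle : ∀ τ ∈ Ico a b, (f τ)⁻¹ ≤ c * (b - τ)) :
    ∫⁻ τ in Ico a b, ENNReal.ofReal (f τ) = ∞ :=
  eq_top_mono (setLIntegral_mono' measurableSet_Ico fun τ hτ => ENNReal.ofReal_le_ofReal <|
      inv_le_of_inv_le₀ (hf τ hτ) (hle τ hτ))
    (lintegral_Ico_inv_mul_sub_eq_top hab hc)

theorem stmt_9_general
    (L : ℝ) (hL : 0 < L)
    (Q : Set (ℝ × ℝ)) (hQ : Q = Set.Icc (0, 0) (L, L))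
    (φ₀ : ℝ × ℝ → ℝ) (hφcont : ContinuousOn φ₀ Q)
    (hmean : ∫ a in Q, φ₀ a = 0)
    (m₀ : ℝ) (hmin : ∀ a ∈ Q, m₀ ≤ φ₀ a)
    (hm₀ : m₀ < 0)
    (τstar : ℝ) (hτstar : τstar = -1 / m₀)
    (F φbar α : ℝ → ℝ)
    (hF : ∀ τ ∈ Set.Ico 0 τstar, F τ = (1 / L ^ 2) * ∫ a in Q, 1 / (1 + τ * φ₀ a))
    (hφbar : ∀ τ ∈ Set.Ico 0 τstar,
      φbar τ = (∫ a in Q, φ₀ a / (1 + τ * φ₀ a) ^ 2) / (∫ a in Q, 1 / (1 + τ * φ₀ a)))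
    (hα : ∀ τ ∈ Set.Ico 0 τstar, α τ = ((F τ) ^ 2)⁻¹)
    (hFtop : Filter.Tendsto F (nhdsWithin τstar (Set.Ico 0 τstar)) Filter.atTop)
    (C : ℝ) (hC : 0 < C)
    (hbound : ∀ a ∈ Q, ∀ τ ∈ Set.Ico 0 τstar,
      α τ * (φ₀ a / (1 + τ * φ₀ a) - φbar τ) ≤ C) :
    (∀ τ ∈ Set.Ico 0 τstar, α τ ≤ 2 * C * (τstar - τ)) ∧
    ∫⁻ τ in Set.Ico 0 τstar, ENNReal.ofReal ((F τ) ^ 2) = ⊤ := by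
  have hQc : IsCompact Q := hQ ▸ isCompact_Icc
  have hQm : MeasurableSet Q := hQ ▸ measurableSet_Icc
  have hQvol : volume Q ≠ 0 := by
    rw [hQ, Icc_prod_eq, Measure.volume_eq_prod, Measure.prod_prod]
    simp [hL]
  obtain ⟨a₀, ha₀, hφa₀⟩ := hQc.exists_eq_zero_of_setIntegral_eq_zero hQm
    (hQ ▸ (convex_Icc _ _).isPreconnected) hQvol hφcont hmean
  have hτstar_pos : 0 < τstar := hτstar ▸ div_pos_of_neg_of_neg neg_one_lt_zero hm₀
  have hden : ∀ τ ∈ Ico 0 τstar, ∀ a ∈ Q, 1 + τ * m₀ ≤ 1 + τ * φ₀ a := fun τ hτ a ha =>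
    add_le_add_right (mul_le_mul_of_nonneg_left (hmin a ha) hτ.1) 1
  have hden_pos : ∀ τ ∈ Ico 0 τstar, 0 < 1 + τ * m₀ := fun τ hτ =>
    one_add_mul_pos_of_mem_Ico hm₀ (hτstar ▸ hτ)
  obtain ⟨M, hM⟩ := hQc.exists_bound_of_continuousOn hφcont
  set G := fun τ => ∫ a in Q, 1 / (1 + τ * φ₀ a)
  have hG' : ∀ τ ∈ Ico 0 τstar, HasDerivAt G (-∫ a in Q, φ₀ a / (1 + τ * φ₀ a) ^ 2) τ :=
    fun τ hτ => hasDerivAt_setIntegral_one_div_one_add_mul hQm hQc.measure_ne_top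
      (hφcont.aestronglyMeasurable hQm) hM (hden_pos τ hτ) (hden τ hτ)
  have hGpos : ∀ τ ∈ Ico 0 τstar, 0 < G τ := fun τ hτ =>
    hQc.setIntegral_one_div_one_add_mul_pos hQm hQvol hφcont fun a ha =>
      (hden_pos τ hτ).trans_le (hden τ hτ a ha)
  have hαle : ∀ τ ∈ Ico 0 τstar, α τ ≤ 2 * C * (τstar - τ) := by
    intro τ hτ
    rw [hα τ hτ, hF τ hτ]
    refine inv_sq_le_mul_sub_of_hasDerivAt (by positivity) hG' (fun t ht => (hGpos t ht).ne')
      (fun t ht => ?_) ?_ hτ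
    · have := hbound a₀ ha₀ t ht
      rw [hφa₀, zero_div, zero_sub, hφbar t ht, hα t ht, hF t ht, mul_neg] at this
      linarith
    · rw [← nhdsWithin_Ico_eq_nhdsLT hτstar_pos]
      exact hFtop.congr' (eventually_nhdsWithin_of_forall hF)
  refine ⟨hαle, lintegral_Ico_eq_top_of_inv_le_mul_sub hτstar_pos (by positivity)
    (fun τ hτ => ?_) fun τ hτ => hα τ hτ ▸ hαle τ hτ⟩
  have := hGpos τ hτ
  rw [hF τ hτ]
  positivity

/-- Assume `F(τ) → +∞` as `τ → τ*⁻`. If the solution is bounded above by a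
constant `C > 0` on `Q × [0,τ*)`, then `α(τ) ≤ 2C(τ*−τ)` on `[0,τ*)` and
`∫₀^{τ*} F(τ)² dτ = +∞`: the blow-up time in the original time variable is infinite, so no
initial datum produces a one-sided (minimum-only) blow up in finite time. -/
theorem stmt_9
    (L : ℝ) (hL : 0 < L)
    (Q : Set (ℝ × ℝ)) (hQ : Q = Set.Icc (0, 0) (L, L))
    (φ₀ : ℝ × ℝ → ℝ) (hφcont : ContinuousOn φ₀ Q)
    (hmean : ∫ a in Q, φ₀ a = 0)
    (m₀ : ℝ) (hmin : ∀ a ∈ Q, m₀ ≤ φ₀ a) (hatt : ∃ a ∈ Q, φ₀ a = m₀)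
    (hm₀ : m₀ < 0)
    (τstar : ℝ) (hτstar : τstar = -1 / m₀)
    (F φbar α : ℝ → ℝ)
    (hF : ∀ τ ∈ Set.Ico 0 τstar, F τ = (1 / L ^ 2) * ∫ a in Q, 1 / (1 + τ * φ₀ a))
    (hφbar : ∀ τ ∈ Set.Ico 0 τstar,
      φbar τ = (∫ a in Q, φ₀ a / (1 + τ * φ₀ a) ^ 2) / (∫ a in Q, 1 / (1 + τ * φ₀ a)))
    (hα : ∀ τ ∈ Set.Ico 0 τstar, α τ = ((F τ) ^ 2)⁻¹)
    (hFtop : Filter.Tendsto F (nhdsWithin τstar (Set.Ico 0 τstar)) Filter.atTop)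
    (C : ℝ) (hC : 0 < C)
    (hbound : ∀ a ∈ Q, ∀ τ ∈ Set.Ico 0 τstar,
      α τ * (φ₀ a / (1 + τ * φ₀ a) - φbar τ) ≤ C) :
    (∀ τ ∈ Set.Ico 0 τstar, α τ ≤ 2 * C * (τstar - τ)) ∧
    ∫⁻ τ in Set.Ico 0 τstar, ENNReal.ofReal ((F τ) ^ 2) = ⊤ :=
  stmt_9_general L hL Q hQ φ₀ hφcont hmean m₀ hmin hm₀ τstar hτstar F φbar α hF hφbar hα hFtop C hC
    hbound
end

section
/- If φ₀ is nondegenerate, then there exist constants c, C > 0 and ε₀ ∈ (0,1) such that for all ε with 0 < ε < ε₀: c·log(1/ε) ≤ ∫_Q da/(ε² + φ₀(a) − m₀) ≤ C·log(1/ε). -/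
open MeasureTheory Real Set Filter

open Metric Module

lemma log_inv_le_log_one_add_div_sq {ε b : ℝ} (hε : 0 < ε) (hεb : ε ≤ b) :
    log (1 / ε) ≤ log (1 + b / ε ^ 2) := by
  apply log_le_log (by positivity)
  calc 1 / ε = ε / ε ^ 2 := by field_simp
    _ ≤ b / ε ^ 2 := by gcongr
    _ ≤ 1 + b / ε ^ 2 := le_add_of_nonneg_left zero_le_one

lemma add_mul_log_one_add_div_sq_le {A B b ε : ℝ} (hA : 0 ≤ A) (hB : 0 ≤ B) (hb : 0 ≤ b)
    (hε : 0 < ε) (hεe : ε ≤ exp (-1)) :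
    A + B * log (1 + b / ε ^ 2) ≤ (A + B * (log (1 + b) + 2)) * log (1 / ε) := by
  have hX : 1 ≤ log (1 / ε) := by
    rw [one_div, log_inv, le_neg, ← log_exp (-1)]
    exact log_le_log hε hεe
  have hε1 : ε ≤ 1 := hεe.trans (exp_le_one_iff.2 (by norm_num))
  have hlog : log (1 + b / ε ^ 2) ≤ log (1 + b) + 2 * log (1 / ε) := by
    calc log (1 + b / ε ^ 2) ≤ log ((1 + b) / ε ^ 2) := by
          apply log_le_log (by positivity)
          rw [add_div]
          gcongr
          exact one_le_one_div (by positivity) (pow_le_one₀ hε.le hε1)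
      _ = log (1 + b) + 2 * log (1 / ε) := by
          rw [log_div (by positivity) (by positivity), one_div, log_inv, log_pow]
          push_cast; ring
  have hlb : 0 ≤ log (1 + b) := log_nonneg (by linarith)
  nlinarith [mul_le_mul_of_nonneg_left hX hA, mul_le_mul_of_nonneg_left hX (mul_nonneg hB hlb),
    mul_le_mul_of_nonneg_left hlog hB]

lemma integral_div_add_mul_sq {c ε R : ℝ} (hc : 0 < c) (hε : 0 < ε) :
    ∫ y in (0 : ℝ)..R, y / (ε ^ 2 + c * y ^ 2) = log (1 + c * R ^ 2 / ε ^ 2) / (2 * c) := by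
  have hpos : ∀ y : ℝ, 0 < ε ^ 2 + c * y ^ 2 := fun y => by positivity
  have hderiv : ∀ y ∈ uIcc 0 R,
      HasDerivAt (fun t => log (1 + c * t ^ 2 / ε ^ 2) / (2 * c)) (y / (ε ^ 2 + c * y ^ 2)) y := by
    intro y _
    have hinner : HasDerivAt (fun t => 1 + c * t ^ 2 / ε ^ 2) (c * (2 * y) / ε ^ 2) y := by
      simpa using (((hasDerivAt_pow 2 y).const_mul c).div_const (ε ^ 2)).const_add 1
    refine ((hinner.log (by positivity)).div_const (2 * c)).congr_deriv ?_
    field_simp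
  have hcont : ContinuousOn (fun y => y / (ε ^ 2 + c * y ^ 2)) (uIcc 0 R) :=
    continuousOn_id.div (by fun_prop) fun y _ => (hpos y).ne'
  rw [intervalIntegral.integral_eq_sub_of_hasDerivAt hderiv hcont.intervalIntegrable]
  simp

lemma integrableOn_one_div_add {X : Type*} [TopologicalSpace X] [T2Space X] [MeasurableSpace X]
    [OpensMeasurableSpace X] (μ : Measure X) [IsFiniteMeasureOnCompacts μ] {Q : Set X}
    {ψ : X → ℝ} {ε : ℝ} (hQ : IsCompact Q) (hψ : ContinuousOn ψ Q) (hψ0 : ∀ a ∈ Q, 0 ≤ ψ a)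
    (hε : 0 < ε) : IntegrableOn (fun a => 1 / (ε ^ 2 + ψ a)) Q μ :=
  (continuousOn_const.div (continuousOn_const.add hψ) fun a ha =>
    (add_pos_of_pos_of_nonneg (pow_pos hε 2) (hψ0 a ha)).ne').integrableOn_compact hQ

section FiniteDimensional

variable {E : Type*} [NormedAddCommGroup E] [NormedSpace ℝ E] [FiniteDimensional ℝ E]
  [MeasurableSpace E] [BorelSpace E] (μ : Measure E) [μ.IsAddHaarMeasure]

theorem setIntegral_closedBall_one_div_add_mul_norm_sq (hE : finrank ℝ E = 2) (x₀ : E)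
    {c ε R : ℝ} (hc : 0 < c) (hε : 0 < ε) (hR : 0 ≤ R) :
    ∫ a in closedBall x₀ R, 1 / (ε ^ 2 + c * ‖a - x₀‖ ^ 2) ∂μ
      = μ.real (ball 0 1) / c * log (1 + c * R ^ 2 / ε ^ 2) := by
  have : Nontrivial E := Module.nontrivial_of_finrank_eq_succ hE
  set h : ℝ → ℝ := (Iic R).indicator fun t => 1 / (ε ^ 2 + c * t ^ 2)
  have hball : ∫ a in closedBall x₀ R, 1 / (ε ^ 2 + c * ‖a - x₀‖ ^ 2) ∂μ
      = ∫ a, h ‖a - x₀‖ ∂μ := by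
    rw [← integral_indicator measurableSet_closedBall]
    congr 1 with a
    simp [h, indicator, mem_closedBall, dist_eq_norm]
  have hradial : ∫ y in Ioi (0 : ℝ), y ^ (2 - 1) • h y
      = ∫ y in (0 : ℝ)..R, y / (ε ^ 2 + c * y ^ 2) := by
    have : ∀ y : ℝ, y ^ (2 - 1) • h y = (Iic R).indicator (fun t => t / (ε ^ 2 + c * t ^ 2)) y := by
      intro y
      by_cases hy : y ∈ Iic R <;> simp [h, hy, div_eq_mul_inv]
    simp_rw [this]
    rw [integral_indicator measurableSet_Iic, intervalIntegral.integral_of_le hR,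
      Measure.restrict_restrict measurableSet_Iic, Iic_inter_Ioi]
  rw [hball, integral_sub_right_eq_self (fun a => h ‖a‖), integral_fun_norm_addHaar μ h, hE,
    hradial, integral_div_add_mul_sq hc hε]
  simp only [nsmul_eq_mul, smul_eq_mul]
  field_simp
  ring

variable {Q : Set E} {ψ : E → ℝ} {ε : ℝ}

lemma integrableOn_one_div_add_mul_norm_sq (x₀ : E) {c R : ℝ} (hc : 0 < c) (hε : 0 < ε) :
    IntegrableOn (fun a => 1 / (ε ^ 2 + c * ‖a - x₀‖ ^ 2)) (closedBall x₀ R) μ :=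
  (continuous_const.div (by fun_prop) fun a => by positivity).continuousOn.integrableOn_compact
    (isCompact_closedBall x₀ R)

theorem le_setIntegral_one_div_add (hE : finrank ℝ E = 2) (hQ : IsCompact Q)
    (hψ : ContinuousOn ψ Q) (hψ0 : ∀ a ∈ Q, 0 ≤ ψ a) (hε : 0 < ε) {x₀ : E} {c R : ℝ}
    (hc : 0 < c) (hR : 0 ≤ R) (hBQ : closedBall x₀ R ⊆ Q)
    (hψle : ∀ a ∈ closedBall x₀ R, ψ a ≤ c * ‖a - x₀‖ ^ 2) :
    μ.real (ball 0 1) / c * log (1 + c * R ^ 2 / ε ^ 2) ≤ ∫ a in Q, 1 / (ε ^ 2 + ψ a) ∂μ := by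
  have hf := integrableOn_one_div_add μ hQ hψ hψ0 hε
  rw [← setIntegral_closedBall_one_div_add_mul_norm_sq μ hE x₀ hc hε hR]
  calc ∫ a in closedBall x₀ R, 1 / (ε ^ 2 + c * ‖a - x₀‖ ^ 2) ∂μ
      ≤ ∫ a in closedBall x₀ R, 1 / (ε ^ 2 + ψ a) ∂μ :=
        setIntegral_mono_on (integrableOn_one_div_add_mul_norm_sq μ x₀ hc hε) (hf.mono_set hBQ)
          measurableSet_closedBall fun a ha => one_div_le_one_div_of_le
            (add_pos_of_pos_of_nonneg (pow_pos hε 2) (hψ0 a (hBQ ha))) (by linarith [hψle a ha])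
    _ ≤ ∫ a in Q, 1 / (ε ^ 2 + ψ a) ∂μ :=
        setIntegral_mono_set hf (ae_restrict_of_forall_mem hQ.measurableSet fun a ha =>
          (one_div_pos.2 (add_pos_of_pos_of_nonneg (pow_pos hε 2) (hψ0 a ha))).le) hBQ.eventuallyLE

theorem setIntegral_one_div_add_le (hE : finrank ℝ E = 2) (hQ : IsCompact Q)
    (hψ : ContinuousOn ψ Q) (hψ0 : ∀ a ∈ Q, 0 ≤ ψ a) (hε : 0 < ε) {S : Finset E} {c r δ : ℝ}
    (hc : 0 < c) (hr : 0 ≤ r) (hδ : 0 < δ) (hfar : ∀ a ∈ Q \ ⋃ i ∈ S, ball i r, δ ≤ ψ a)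
    (hnear : ∀ i ∈ S, ∀ a ∈ Q, ‖a - i‖ ≤ r → c * ‖a - i‖ ^ 2 ≤ ψ a) :
    ∫ a in Q, 1 / (ε ^ 2 + ψ a) ∂μ
      ≤ μ.real Q / δ + S.card * (μ.real (ball 0 1) / c * log (1 + c * r ^ 2 / ε ^ 2)) := by
  set g : E → E → ℝ := fun i a => 1 / (ε ^ 2 + c * ‖a - i‖ ^ 2)
  have hg0 : ∀ i a, 0 ≤ g i a := fun i a => by positivity
  have hgi : ∀ i, IntegrableOn (g i) (closedBall i r) μ := fun i =>
    integrableOn_one_div_add_mul_norm_sq μ i hc hε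
  have hpointwise : ∀ a ∈ Q, 1 / (ε ^ 2 + ψ a)
      ≤ 1 / δ + ∑ i ∈ S, (closedBall i r).indicator (g i) a := by
    intro a ha
    have hsum0 : 0 ≤ ∑ i ∈ S, (closedBall i r).indicator (g i) a :=
      Finset.sum_nonneg fun i _ => indicator_nonneg (fun a _ => hg0 i a) a
    by_cases hU : a ∈ ⋃ i ∈ S, ball i r
    · obtain ⟨i, hi, hai⟩ := mem_iUnion₂.1 hU
      have hai' : a ∈ closedBall i r := ball_subset_closedBall hai
      have hnorm : ‖a - i‖ ≤ r := by simpa [dist_eq_norm] using hai'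
      calc 1 / (ε ^ 2 + ψ a) ≤ (closedBall i r).indicator (g i) a := by
            rw [indicator_of_mem hai']
            exact one_div_le_one_div_of_le (by positivity) (by linarith [hnear i hi a ha hnorm])
        _ ≤ ∑ i ∈ S, (closedBall i r).indicator (g i) a :=
            Finset.single_le_sum (f := fun j => (closedBall j r).indicator (g j) a)
              (fun j _ => indicator_nonneg (fun a _ => hg0 j a) a) hi
        _ ≤ _ := le_add_of_nonneg_left (one_div_pos.2 hδ).le
    · have := hfar a ⟨ha, hU⟩
      calc 1 / (ε ^ 2 + ψ a) ≤ 1 / δ :=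
            one_div_le_one_div_of_le hδ (by linarith [sq_nonneg ε])
        _ ≤ _ := le_add_of_nonneg_right hsum0
  have hind : ∀ i, IntegrableOn ((closedBall i r).indicator (g i)) Q μ := fun i =>
    ((hgi i).integrable_indicator measurableSet_closedBall).integrableOn
  have hball : ∀ i ∈ S, ∫ a in Q, (closedBall i r).indicator (g i) a ∂μ
      ≤ μ.real (ball 0 1) / c * log (1 + c * r ^ 2 / ε ^ 2) := fun i _ => by
    rw [setIntegral_indicator measurableSet_closedBall,
      ← setIntegral_closedBall_one_div_add_mul_norm_sq μ hE i hc hε hr]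
    exact setIntegral_mono_set (hgi i) (ae_of_all _ (hg0 i)) inter_subset_right.eventuallyLE
  have hconst : IntegrableOn (fun _ => 1 / δ) Q μ := integrableOn_const hQ.measure_lt_top.ne
  have hsum : IntegrableOn (fun a => ∑ i ∈ S, (closedBall i r).indicator (g i) a) Q μ :=
    integrable_finsetSum _ fun i _ => hind i
  calc ∫ a in Q, 1 / (ε ^ 2 + ψ a) ∂μ
      ≤ ∫ a in Q, (1 / δ + ∑ i ∈ S, (closedBall i r).indicator (g i) a) ∂μ :=
        setIntegral_mono_on (integrableOn_one_div_add μ hQ hψ hψ0 hε) (hconst.add hsum)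
          hQ.measurableSet hpointwise
    _ = μ.real Q / δ + ∑ i ∈ S, ∫ a in Q, (closedBall i r).indicator (g i) a ∂μ := by
        rw [integral_add hconst hsum, integral_finsetSum _ fun i _ => hind i,
          setIntegral_const, smul_eq_mul, mul_one_div]
    _ ≤ _ := by
        grw [Finset.sum_le_sum hball, Finset.sum_const, nsmul_eq_mul]

theorem exists_mul_log_inv_le_setIntegral (hE : finrank ℝ E = 2) (hQ : IsCompact Q)
    (hψ : ContinuousOn ψ Q) (hψ0 : ∀ a ∈ Q, 0 ≤ ψ a) {x₀ : E} (hx₀ : x₀ ∈ interior Q)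
    {c r : ℝ} (hc : 0 < c) (hr : 0 < r)
    (hquad : ∀ a ∈ Q, ‖a - x₀‖ ≤ r → ψ a ≤ c * ‖a - x₀‖ ^ 2) :
    ∃ c' > 0, ∃ ε₁ > 0, ∀ ε, 0 < ε → ε < ε₁ →
      c' * log (1 / ε) ≤ ∫ a in Q, 1 / (ε ^ 2 + ψ a) ∂μ := by
  obtain ⟨R, hR, hRQ⟩ := nhds_basis_closedBall.mem_iff.1 (mem_interior_iff_mem_nhds.1 hx₀)
  have hρQ : closedBall x₀ (min R r) ⊆ Q :=
    (closedBall_subset_closedBall (min_le_left _ _)).trans hRQ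
  have hV : 0 < μ.real (ball 0 1) :=
    ENNReal.toReal_pos (measure_ball_pos _ _ one_pos).ne' measure_ball_lt_top.ne
  refine ⟨μ.real (ball 0 1) / c, by positivity, c * min R r ^ 2, by positivity,
    fun ε hε hεε₁ => ?_⟩
  calc μ.real (ball 0 1) / c * log (1 / ε)
      ≤ μ.real (ball 0 1) / c * log (1 + c * min R r ^ 2 / ε ^ 2) := by
        gcongr ?_ * ?_
        exact log_inv_le_log_one_add_div_sq hε hεε₁.le
    _ ≤ _ := le_setIntegral_one_div_add μ hE hQ hψ hψ0 hε hc (by positivity) hρQ fun a ha =>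
        hquad a (hρQ ha) ((mem_closedBall_iff_norm.1 ha).trans (min_le_right _ _))

theorem exists_setIntegral_le_mul_log_inv (hE : finrank ℝ E = 2) (hQ : IsCompact Q)
    (hψ : ContinuousOn ψ Q) (hψ0 : ∀ a ∈ Q, 0 ≤ ψ a) {S : Finset E} (hS : S.Nonempty)
    (hzero : ∀ a ∈ Q, ψ a = 0 → a ∈ S) {c r : ℝ} (hc : 0 < c) (hr : 0 < r)
    (hquad : ∀ i ∈ S, ∀ a ∈ Q, ‖a - i‖ ≤ r → c * ‖a - i‖ ^ 2 ≤ ψ a) :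
    ∃ C > 0, ∀ ε, 0 < ε → ε ≤ exp (-1) → ∫ a in Q, 1 / (ε ^ 2 + ψ a) ∂μ ≤ C * log (1 / ε) := by
  obtain ⟨δ, hδ, hfar⟩ := (hQ.diff (isOpen_biUnion fun i _ => isOpen_ball)).exists_forall_le'
    (hψ.mono sdiff_subset) fun a ha => (hψ0 a ha.1).lt_of_ne' fun h =>
      ha.2 (mem_biUnion (hzero a ha.1 h) (mem_ball_self hr))
  have hV : 0 < μ.real (ball 0 1) :=
    ENNReal.toReal_pos (measure_ball_pos _ _ one_pos).ne' measure_ball_lt_top.ne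
  have hS0 : (0 : ℝ) < S.card := Nat.cast_pos.2 hS.card_pos
  have hℓ : 0 ≤ log (1 + c * r ^ 2) := log_nonneg (by nlinarith)
  refine ⟨μ.real Q / δ + S.card * (μ.real (ball 0 1) / c) * (log (1 + c * r ^ 2) + 2),
    by positivity, fun ε hε hεe => ?_⟩
  calc _ ≤ _ := setIntegral_one_div_add_le μ hE hQ hψ hψ0 hε hc hr.le hδ hfar hquad
    _ ≤ _ := by
      rw [← mul_assoc]
      exact add_mul_log_one_add_div_sq_le (by positivity) (by positivity) (by positivity) hε hεe

end FiniteDimensional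

theorem stmt_11_general
    (L : ℝ)
    (Q : Set (ℝ × ℝ)) (hQ : Q = Set.Icc (0, 0) (L, L))
    (φ₀ : ℝ × ℝ → ℝ) (hφcont : ContinuousOn φ₀ Q)
    (m₀ : ℝ) (hmin : ∀ a ∈ Q, m₀ ≤ φ₀ a) (hatt : ∃ a ∈ Q, φ₀ a = m₀)
    (hnd : Nondegenerate Q φ₀ m₀) :
    ∃ c > (0 : ℝ), ∃ C > (0 : ℝ), ∃ ε₀ ∈ Set.Ioo (0 : ℝ) 1,
      ∀ ε : ℝ, 0 < ε → ε < ε₀ →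
        c * Real.log (1 / ε) ≤ (∫ a in Q, 1 / (ε ^ 2 + φ₀ a - m₀)) ∧
        (∫ a in Q, 1 / (ε ^ 2 + φ₀ a - m₀)) ≤ C * Real.log (1 / ε) := by
  obtain ⟨S, hS, hSint, r, hr, c₁, c₂, hc₁, hc₁₂, hquad⟩ := hnd
  have hQc : IsCompact Q := hQ ▸ isCompact_Icc
  have hψ : ContinuousOn (fun a => φ₀ a - m₀) Q := hφcont.sub continuousOn_const
  have hψ0 : ∀ a ∈ Q, 0 ≤ φ₀ a - m₀ := fun a ha => sub_nonneg.2 (hmin a ha)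
  have hzero : ∀ a ∈ Q, φ₀ a - m₀ = 0 → a ∈ S := fun a ha h =>
    Finset.mem_coe.1 (hS ▸ ⟨ha, sub_eq_zero.1 h⟩)
  obtain ⟨a₀, ha₀Q, ha₀⟩ := hatt
  have ha₀S : a₀ ∈ S := hzero a₀ ha₀Q (sub_eq_zero.2 ha₀)
  have hE : finrank ℝ (ℝ × ℝ) = 2 := by simp
  obtain ⟨c, hc, ε₁, hε₁, hlower⟩ := exists_mul_log_inv_le_setIntegral volume hE hQc hψ hψ0
    (hSint ha₀S) (hc₁.trans_le hc₁₂) hr fun a ha h => (hquad a₀ ha₀S a ha h).2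
  obtain ⟨C, hC, hupper⟩ := exists_setIntegral_le_mul_log_inv volume hE hQc hψ hψ0 ⟨a₀, ha₀S⟩
    hzero hc₁ hr fun i hi a ha h => (hquad i hi a ha h).1
  refine ⟨c, hc, C, hC, min ε₁ (exp (-1)),
    ⟨by positivity, (min_le_right _ _).trans_lt (exp_lt_one_iff.2 (by norm_num))⟩,
    fun ε hε hεε₀ => ?_⟩
  simp_rw [add_sub_assoc]
  exact ⟨hlower ε hε (hεε₀.trans_le (min_le_left _ _)),
    hupper ε hε (hεε₀.le.trans (min_le_right _ _))⟩

/-- If `φ₀` is nondegenerate, there exist `c, C > 0` and `ε₀ ∈ (0,1)` with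
`c·log(1/ε) ≤ ∫_Q da/(ε² + φ₀(a) − m₀) ≤ C·log(1/ε)` for all `0 < ε < ε₀`. -/
theorem stmt_11
    (L : ℝ) (hL : 0 < L)
    (Q : Set (ℝ × ℝ)) (hQ : Q = Set.Icc (0, 0) (L, L))
    (φ₀ : ℝ × ℝ → ℝ) (hφcont : ContinuousOn φ₀ Q)
    (m₀ : ℝ) (hmin : ∀ a ∈ Q, m₀ ≤ φ₀ a) (hatt : ∃ a ∈ Q, φ₀ a = m₀)
    (hnd : Nondegenerate Q φ₀ m₀) :
    ∃ c > (0 : ℝ), ∃ C > (0 : ℝ), ∃ ε₀ ∈ Set.Ioo (0 : ℝ) 1,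
      ∀ ε : ℝ, 0 < ε → ε < ε₀ →
        c * Real.log (1 / ε) ≤ (∫ a in Q, 1 / (ε ^ 2 + φ₀ a - m₀)) ∧
        (∫ a in Q, 1 / (ε ^ 2 + φ₀ a - m₀)) ≤ C * Real.log (1 / ε) :=
  stmt_11_general L Q hQ φ₀ hφcont m₀ hmin hatt hnd
end

section
/- If φ₀ is nondegenerate, then there exist constants c, C > 0 and ε₀ ∈ (0,1) such that for all ε with 0 < ε < ε₀: c/ε² ≤ ∫_Q da/(ε² + φ₀(a) − m₀)² ≤ C/ε². -/
/-!
Write `ψ = φ₀ - m₀`. Near a minimum point `a₀`, `ψ ≤ c₂ ‖a - a₀‖²`, so on the ball of radius `ε`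
around `a₀` (area `4ε²`) the integrand is at least `((1 + c₂) ε²)⁻²`: this gives the lower bound.
For the upper bound, compactness gives `ψ ≥ δ > 0` away from the minimum points, while near a
minimum point `p` the sup-norm bound `ψ ≥ c₁ ‖a - p‖²` dominates `(ε² + ψ)⁻²` by the product
`(ε² + c₁ (a₁ - p₁)²)⁻¹ (ε² + c₁ (a₂ - p₂)²)⁻¹`, whose integral over the plane is
`π² / (c₁ ε²)` by Fubini and `∫ (1 + t²)⁻¹ = π`.
-/

open MeasureTheory Real Set Filter

lemma inv_add_mul_sq_eq {a c : ℝ} (ha : 0 < a) (hc : 0 < c) (t : ℝ) :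
    (a + c * t ^ 2)⁻¹ = a⁻¹ * (1 + (√(c / a) * t) ^ 2)⁻¹ := by
  rw [mul_pow, sq_sqrt (div_pos hc ha).le, ← mul_inv]
  field_simp

lemma integrable_inv_add_mul_sq {a c : ℝ} (ha : 0 < a) (hc : 0 < c) :
    Integrable fun t : ℝ => (a + c * t ^ 2)⁻¹ := by
  simp_rw [inv_add_mul_sq_eq ha hc]
  exact ((integrable_comp_mul_left_iff (fun x : ℝ => (1 + x ^ 2)⁻¹)
    (sqrt_pos.2 (div_pos hc ha)).ne').2 integrable_inv_one_add_sq).const_mul _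

lemma integral_inv_add_mul_sq {a c : ℝ} (ha : 0 < a) (hc : 0 < c) :
    ∫ t : ℝ, (a + c * t ^ 2)⁻¹ = π / √(a * c) := by
  simp_rw [inv_add_mul_sq_eq ha hc]
  rw [integral_const_mul, Measure.integral_comp_mul_left (fun x : ℝ => (1 + x ^ 2)⁻¹),
    integral_univ_inv_one_add_sq, abs_of_pos (inv_pos.2 (sqrt_pos.2 (div_pos hc ha))),
    smul_eq_mul, sqrt_div' _ ha.le, sqrt_mul ha.le]
  have := sqrt_pos.2 ha
  have := sqrt_pos.2 hc
  have := mul_self_sqrt ha.le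
  field_simp
  linarith

/-- An integrable majorant of `(a + c ‖x - p‖²)⁻²` on `ℝ × ℝ` whose integral factors by Fubini. -/
noncomputable def lorentzianProd (a c : ℝ) (p x : ℝ × ℝ) : ℝ :=
  (a + c * (x.1 - p.1) ^ 2)⁻¹ * (a + c * (x.2 - p.2) ^ 2)⁻¹

lemma lorentzianProd_nonneg {a c : ℝ} (ha : 0 ≤ a) (hc : 0 ≤ c) (p x : ℝ × ℝ) :
    0 ≤ lorentzianProd a c p x := by
  unfold lorentzianProd; positivity

lemma integrable_lorentzianProd {a c : ℝ} (ha : 0 < a) (hc : 0 < c) (p : ℝ × ℝ) :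
    Integrable (lorentzianProd a c p) := by
  have h := integrable_inv_add_mul_sq ha hc
  rw [Measure.volume_eq_prod]
  exact (h.comp_sub_right p.1).mul_prod (h.comp_sub_right p.2)

lemma integral_lorentzianProd {a c : ℝ} (ha : 0 < a) (hc : 0 < c) (p : ℝ × ℝ) :
    ∫ x, lorentzianProd a c p x = π ^ 2 / (a * c) := by
  unfold lorentzianProd
  rw [Measure.volume_eq_prod, integral_prod_mul (fun t : ℝ => (a + c * (t - p.1) ^ 2)⁻¹)
    (fun t : ℝ => (a + c * (t - p.2) ^ 2)⁻¹),
    integral_sub_right_eq_self (fun t : ℝ => (a + c * t ^ 2)⁻¹),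
    integral_sub_right_eq_self (fun t : ℝ => (a + c * t ^ 2)⁻¹),
    integral_inv_add_mul_sq ha hc, div_mul_div_comm, mul_self_sqrt (mul_pos ha hc).le, sq]

/-- The norm of `ℝ × ℝ` is the sup norm, so a bound `c ‖x - p‖² ≤ s` controls each coordinate
separately. -/
lemma one_div_sq_le_lorentzianProd {a c s : ℝ} {p x : ℝ × ℝ} (ha : 0 < a) (hc : 0 ≤ c)
    (hs : c * ‖x - p‖ ^ 2 ≤ s) : 1 / (a + s) ^ 2 ≤ lorentzianProd a c p x := by
  have hcoord : ∀ t : ℝ, |t| ≤ ‖x - p‖ → a + c * t ^ 2 ≤ a + s := fun t ht => by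
    have := pow_le_pow_left₀ (abs_nonneg t) ht 2
    rw [sq_abs] at this
    nlinarith
  have h₁ := hcoord (x.1 - p.1) (norm_fst_le (x - p))
  have h₂ := hcoord (x.2 - p.2) (norm_snd_le (x - p))
  have hpos : 0 < a + s := by nlinarith [mul_nonneg hc (sq_nonneg ‖x - p‖)]
  unfold lorentzianProd
  rw [one_div, sq, mul_inv]
  gcongr

lemma IsCompact.exists_pos_le_of_pos {X : Type*} [TopologicalSpace X] {K : Set X} {f : X → ℝ}
    (hK : IsCompact K) (hf : ContinuousOn f K) (hpos : ∀ x ∈ K, 0 < f x) :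
    ∃ δ > 0, ∀ x ∈ K, δ ≤ f x := by
  rcases K.eq_empty_or_nonempty with rfl | hne
  · exact ⟨1, one_pos, by simp⟩
  · obtain ⟨x₀, hx₀, hmin⟩ := hK.exists_isMinOn hne hf
    exact ⟨f x₀, hpos x₀ hx₀, fun x hx => hmin hx⟩

section

variable {X : Type*} [NormedAddCommGroup X] {Q : Set X} {φ : X → ℝ} {m : ℝ}

lemma exists_gap_or_near_minimum {S : Finset X} {r : ℝ} (hQ : IsCompact Q)
    (hφ : ContinuousOn φ Q) (hmin : ∀ x ∈ Q, m ≤ φ x) (hS : {x ∈ Q | φ x = m} ⊆ S)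
    (hr : 0 < r) : ∃ δ > 0, ∀ x ∈ Q, δ ≤ φ x - m ∨ ∃ p ∈ S, ‖x - p‖ < r := by
  set U := ⋃ p ∈ S, Metric.ball p r
  have hgap : ∀ x ∈ Q \ U, 0 < φ x - m := fun x hx => by
    refine sub_pos.2 ((hmin x hx.1).lt_of_ne fun h => hx.2 ?_)
    exact mem_biUnion (hS ⟨hx.1, h.symm⟩) (Metric.mem_ball_self hr)
  obtain ⟨δ, hδ, hδle⟩ :=
    (hQ.diff (isOpen_biUnion fun p _ => Metric.isOpen_ball)).exists_pos_le_of_pos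
      ((hφ.mono sdiff_subset).sub continuousOn_const) hgap
  refine ⟨δ, hδ, fun x hx => ?_⟩
  by_cases hxU : x ∈ U
  · obtain ⟨p, hp, hxp⟩ := mem_iUnion₂.1 hxU
    exact Or.inr ⟨p, hp, mem_ball_iff_norm.1 hxp⟩
  · exact Or.inl (hδle x ⟨hx, hxU⟩)

lemma integrableOn_one_div_sq [MeasurableSpace X] [OpensMeasurableSpace X] {μ : Measure X}
    [IsFiniteMeasureOnCompacts μ] {a : ℝ} (hQ : IsCompact Q) (hφ : ContinuousOn φ Q)
    (hmin : ∀ x ∈ Q, m ≤ φ x) (ha : 0 < a) :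
    IntegrableOn (fun x => 1 / (a + φ x - m) ^ 2) Q μ := by
  refine ContinuousOn.integrableOn_compact hQ (continuousOn_const.div
    (((continuousOn_const.add hφ).sub continuousOn_const).pow 2) fun x hx => ?_)
  have : 0 < a + φ x - m := by linarith [hmin x hx]
  positivity

end

lemma one_div_sq_le_add_sum_lorentzianProd {S : Finset (ℝ × ℝ)} {x : ℝ × ℝ} {ψ a δ c : ℝ}
    (ha : 0 < a) (hδ : 0 < δ) (hc : 0 ≤ c) (hx : δ ≤ ψ ∨ ∃ p ∈ S, c * ‖x - p‖ ^ 2 ≤ ψ) :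
    1 / (a + ψ) ^ 2 ≤ 1 / δ ^ 2 + ∑ p ∈ S, lorentzianProd a c p x := by
  have hsum : 0 ≤ ∑ p ∈ S, lorentzianProd a c p x :=
    Finset.sum_nonneg fun p _ => lorentzianProd_nonneg ha.le hc p x
  rcases hx with hψ | ⟨p, hp, hxp⟩
  · refine le_add_of_le_of_nonneg ?_ hsum
    gcongr
    linarith
  · refine le_add_of_nonneg_of_le (by positivity) ?_
    exact (one_div_sq_le_lorentzianProd ha hc hxp).trans
      (Finset.single_le_sum (fun q _ => lorentzianProd_nonneg ha.le hc q x) hp)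

lemma setIntegral_one_div_sq_le {Q : Set (ℝ × ℝ)} {φ : ℝ × ℝ → ℝ} {S : Finset (ℝ × ℝ)}
    {m ε δ c : ℝ} (hQ : IsCompact Q) (hφ : ContinuousOn φ Q) (hmin : ∀ x ∈ Q, m ≤ φ x)
    (hε : 0 < ε) (hε1 : ε ≤ 1) (hδ : 0 < δ) (hc : 0 < c)
    (hnear : ∀ x ∈ Q, δ ≤ φ x - m ∨ ∃ p ∈ S, c * ‖x - p‖ ^ 2 ≤ φ x - m) :
    ∫ x in Q, 1 / (ε ^ 2 + φ x - m) ^ 2 ≤ (volume.real Q / δ ^ 2 + S.card * π ^ 2 / c) / ε ^ 2 := by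
  have ha : 0 < ε ^ 2 := by positivity
  have hkernel : IntegrableOn (fun x => ∑ p ∈ S, lorentzianProd (ε ^ 2) c p x) Q :=
    (integrable_finsetSum S fun p _ => integrable_lorentzianProd ha hc p).integrableOn
  have hconst : IntegrableOn (fun _ => 1 / δ ^ 2) Q := integrableOn_const hQ.measure_lt_top.ne
  calc ∫ x in Q, 1 / (ε ^ 2 + φ x - m) ^ 2
      ≤ ∫ x in Q, (1 / δ ^ 2 + ∑ p ∈ S, lorentzianProd (ε ^ 2) c p x) :=
        setIntegral_mono_on (integrableOn_one_div_sq hQ hφ hmin ha) (hconst.add hkernel)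
          hQ.measurableSet fun x hx => by
            rw [add_sub_assoc]
            exact one_div_sq_le_add_sum_lorentzianProd ha hδ hc.le (hnear x hx)
    _ = volume.real Q / δ ^ 2 + ∑ p ∈ S, ∫ x in Q, lorentzianProd (ε ^ 2) c p x := by
        rw [integral_add hconst hkernel, setIntegral_const, smul_eq_mul, mul_one_div,
          integral_finsetSum S fun p _ => (integrable_lorentzianProd ha hc p).integrableOn]
    _ ≤ volume.real Q / δ ^ 2 + ∑ p ∈ S, π ^ 2 / (ε ^ 2 * c) := by
        gcongr with p
        rw [← integral_lorentzianProd ha hc p]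
        exact setIntegral_le_integral (integrable_lorentzianProd ha hc p)
          (ae_of_all _ (lorentzianProd_nonneg ha.le hc.le p))
    _ ≤ volume.real Q / δ ^ 2 / ε ^ 2 + S.card * π ^ 2 / c / ε ^ 2 := by
        rw [Finset.sum_const, nsmul_eq_mul]
        gcongr ?_ + ?_
        · exact le_div_self (by positivity) ha (pow_le_one₀ hε.le hε1)
        · exact le_of_eq (by ring)
    _ = (volume.real Q / δ ^ 2 + S.card * π ^ 2 / c) / ε ^ 2 := (add_div ..).symm

lemma measureReal_closedBall_prod (x : ℝ × ℝ) {r : ℝ} (hr : 0 ≤ r) :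
    volume.real (Metric.closedBall x r) = (2 * r) ^ 2 := by
  rw [measureReal_def, ← closedBall_prod_same, Measure.volume_eq_prod, Measure.prod_prod,
    Real.volume_closedBall, Real.volume_closedBall, ← ENNReal.ofReal_mul (by positivity),
    ENNReal.toReal_ofReal (by positivity), sq]

lemma div_sq_le_setIntegral_one_div_sq {Q : Set (ℝ × ℝ)} {φ : ℝ × ℝ → ℝ} {x₀ : ℝ × ℝ}
    {m C ε : ℝ} (hε : 0 < ε) (hC : 0 ≤ C) (hball : Metric.closedBall x₀ ε ⊆ Q)
    (hint : IntegrableOn (fun x => 1 / (ε ^ 2 + φ x - m) ^ 2) Q)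
    (hmin : ∀ x ∈ Metric.closedBall x₀ ε, m ≤ φ x)
    (hup : ∀ x ∈ Metric.closedBall x₀ ε, φ x - m ≤ C * ‖x - x₀‖ ^ 2) :
    4 / (1 + C) ^ 2 / ε ^ 2 ≤ ∫ x in Q, 1 / (ε ^ 2 + φ x - m) ^ 2 := by
  have hpointwise : ∀ x ∈ Metric.closedBall x₀ ε,
      1 / ((1 + C) * ε ^ 2) ^ 2 ≤ 1 / (ε ^ 2 + φ x - m) ^ 2 := fun x hx => by
    have hdist : ‖x - x₀‖ ^ 2 ≤ ε ^ 2 :=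
      pow_le_pow_left₀ (norm_nonneg _) (mem_closedBall_iff_norm.1 hx) 2
    have := hmin x hx
    have := hup x hx
    have := mul_le_mul_of_nonneg_left hdist hC
    have hpos : 0 < ε ^ 2 + φ x - m := by linarith [pow_pos hε 2]
    have hle : ε ^ 2 + φ x - m ≤ (1 + C) * ε ^ 2 := by linarith
    exact one_div_le_one_div_of_le (by positivity) (pow_le_pow_left₀ hpos.le hle 2)
  calc 4 / (1 + C) ^ 2 / ε ^ 2
      = 1 / ((1 + C) * ε ^ 2) ^ 2 * volume.real (Metric.closedBall x₀ ε) := by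
        rw [measureReal_closedBall_prod x₀ hε.le]
        field_simp
        ring
    _ ≤ ∫ x in Metric.closedBall x₀ ε, 1 / (ε ^ 2 + φ x - m) ^ 2 :=
        setIntegral_ge_of_const_le_real Metric.isClosed_closedBall.measurableSet
          measure_closedBall_lt_top.ne hpointwise (hint.mono_set hball)
    _ ≤ ∫ x in Q, 1 / (ε ^ 2 + φ x - m) ^ 2 :=
        setIntegral_mono_set hint (ae_of_all _ fun x => by positivity) hball.eventuallyLE

theorem stmt_12_general
    (L : ℝ)
    (Q : Set (ℝ × ℝ)) (hQ : Q = Set.Icc (0, 0) (L, L))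
    (φ₀ : ℝ × ℝ → ℝ) (hφcont : ContinuousOn φ₀ Q)
    (m₀ : ℝ) (hmin : ∀ a ∈ Q, m₀ ≤ φ₀ a) (hatt : ∃ a ∈ Q, φ₀ a = m₀)
    (hnd : Nondegenerate Q φ₀ m₀) :
    ∃ c > (0 : ℝ), ∃ C > (0 : ℝ), ∃ ε₀ ∈ Set.Ioo (0 : ℝ) 1,
      ∀ ε : ℝ, 0 < ε → ε < ε₀ →
        c / ε ^ 2 ≤ (∫ a in Q, 1 / (ε ^ 2 + φ₀ a - m₀) ^ 2) ∧
        (∫ a in Q, 1 / (ε ^ 2 + φ₀ a - m₀) ^ 2) ≤ C / ε ^ 2 := by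
  obtain ⟨S, hS, hSint, r, hr, c₁, c₂, hc₁, hc₁₂, hbound⟩ := hnd
  have hc₂ : 0 < c₂ := hc₁.trans_le hc₁₂
  have hQc : IsCompact Q := hQ ▸ isCompact_Icc
  obtain ⟨x₀, hx₀Q, hx₀⟩ := hatt
  have hx₀S : x₀ ∈ S := by
    rw [← Finset.mem_coe, hS]
    exact ⟨hx₀Q, hx₀⟩
  have hcard : (0 : ℝ) < S.card := by exact_mod_cast Finset.card_pos.2 ⟨x₀, hx₀S⟩
  obtain ⟨ρ, hρ, hρQ⟩ := Metric.nhds_basis_closedBall.mem_iff.1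
    (mem_interior_iff_mem_nhds.1 (hSint hx₀S))
  obtain ⟨δ, hδ, hgap⟩ := exists_gap_or_near_minimum hQc hφcont hmin hS.symm.subset hr
  have hnear : ∀ x ∈ Q, δ ≤ φ₀ x - m₀ ∨ ∃ p ∈ S, c₁ * ‖x - p‖ ^ 2 ≤ φ₀ x - m₀ :=
    fun x hx => (hgap x hx).imp_right fun ⟨p, hp, hxp⟩ => ⟨p, hp, (hbound p hp x hx hxp.le).1⟩
  refine ⟨4 / (1 + c₂) ^ 2, by positivity, volume.real Q / δ ^ 2 + S.card * π ^ 2 / c₁,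
    by positivity, min ρ (min r (1 / 2)), ⟨by positivity, by norm_num⟩, fun ε hε hεlt => ?_⟩
  simp only [lt_min_iff] at hεlt
  obtain ⟨hερ, hεr, hε1⟩ := hεlt
  have hball : Metric.closedBall x₀ ε ⊆ Q :=
    (Metric.closedBall_subset_closedBall hερ.le).trans hρQ
  constructor
  · exact div_sq_le_setIntegral_one_div_sq hε hc₂.le hball
      (integrableOn_one_div_sq hQc hφcont hmin (by positivity)) (fun x hx => hmin x (hball hx))
      fun x hx => (hbound x₀ hx₀S x (hball hx) ((mem_closedBall_iff_norm.1 hx).trans hεr.le)).2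
  · exact setIntegral_one_div_sq_le hQc hφcont hmin hε (by linarith) hδ hc₁ hnear

/-- If `φ₀` is nondegenerate, there exist `c, C > 0` and `ε₀ ∈ (0,1)` with
`c/ε² ≤ ∫_Q da/(ε² + φ₀(a) − m₀)² ≤ C/ε²` for all `0 < ε < ε₀`. -/
theorem stmt_12
    (L : ℝ) (hL : 0 < L)
    (Q : Set (ℝ × ℝ)) (hQ : Q = Set.Icc (0, 0) (L, L))
    (φ₀ : ℝ × ℝ → ℝ) (hφcont : ContinuousOn φ₀ Q)
    (m₀ : ℝ) (hmin : ∀ a ∈ Q, m₀ ≤ φ₀ a) (hatt : ∃ a ∈ Q, φ₀ a = m₀)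
    (hnd : Nondegenerate Q φ₀ m₀) :
    ∃ c > (0 : ℝ), ∃ C > (0 : ℝ), ∃ ε₀ ∈ Set.Ioo (0 : ℝ) 1,
      ∀ ε : ℝ, 0 < ε → ε < ε₀ →
        c / ε ^ 2 ≤ (∫ a in Q, 1 / (ε ^ 2 + φ₀ a - m₀) ^ 2) ∧
        (∫ a in Q, 1 / (ε ^ 2 + φ₀ a - m₀) ^ 2) ≤ C / ε ^ 2 :=
  stmt_12_general L Q hQ φ₀ hφcont m₀ hmin hatt hnd
end

section
/- If φ₀ is nondegenerate, then there exist constants c, C > 0 and τ₀ ∈ (0,τ*) such that for all τ ∈ (τ₀,τ*): c·log(1/(τ*−τ)) ≤ F(τ) ≤ C·log(1/(τ*−τ)). -/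
open MeasureTheory Real Set Filter

open Topology Metric

/-!
Write `1 + τ φ₀ = ε + τ (φ₀ - m₀)` with `ε = 1 + τ m₀ = (τ* - τ) / τ*`. For any norm on a plane
(`ℝ × ℝ` carries the sup norm, so its balls are squares), integrating in polar coordinates gives
`∫ x in closedBall z r, (ε + K ‖x - z‖²)⁻¹ = vol (ball 0 1) · K⁻¹ · log ((ε + K r²) / ε)`,
which grows like `log (1 / ε)`. Near each minimum point the integrand is squeezed between two
such radial functions, and away from the minimum points `φ₀ - m₀` is bounded below by a positive
constant, so the integrand stays bounded there. Hence `F τ` is of order `log (1 / (τ* - τ))`.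
-/

theorem tendsto_log_one_div_sub_nhdsLT (b : ℝ) :
    Tendsto (fun τ => log (1 / (b - τ))) (𝓝[<] b) atTop := by
  have h : Tendsto (fun τ => b - τ) (𝓝[<] b) (𝓝[>] 0) := by
    refine tendsto_nhdsWithin_iff.2 ⟨?_, ?_⟩
    · simpa using ((continuous_sub_left b).tendsto b).mono_left nhdsWithin_le_nhds
    · filter_upwards [self_mem_nhdsWithin] with τ hτ using sub_pos.2 (mem_Iio.1 hτ)
  simpa only [one_div, Function.comp_def] using
    tendsto_log_atTop.comp (tendsto_inv_nhdsGT_zero.comp h)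

theorem exists_mem_Ioo_forall_of_eventually_nhdsLT {α : Type*} [LinearOrder α]
    [TopologicalSpace α] [OrderTopology α] [DenselyOrdered α] {a b : α} (hab : a < b)
    {P : α → Prop} (h : ∀ᶠ x in 𝓝[<] b, P x) : ∃ x₀ ∈ Ioo a b, ∀ x ∈ Ioo x₀ b, P x := by
  obtain ⟨l, hl, hlP⟩ := (mem_nhdsLT_iff_exists_Ioo_subset' hab).1 h
  obtain ⟨c, hac, hcb⟩ := exists_between hab
  exact ⟨max l c, ⟨lt_max_of_lt_right hac, max_lt hl hcb⟩,
    fun x hx => hlP ⟨(le_max_left l c).trans_lt hx.1, hx.2⟩⟩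

theorem eventually_half_mul_le_and_le_add_one_mul {ι : Type*} {l : Filter ι} {ℓ g : ι → ℝ}
    (hℓ : Tendsto ℓ l atTop) {α β A D : ℝ} (hα : 0 < α)
    (hlow : ∀ᶠ x in l, α * (ℓ x + β) ≤ g x) (hup : ∀ᶠ x in l, g x ≤ A * ℓ x + D) :
    ∀ᶠ x in l, α / 2 * ℓ x ≤ g x ∧ g x ≤ (A + 1) * ℓ x := by
  filter_upwards [hlow, hup, hℓ.eventually_ge_atTop (-2 * β), hℓ.eventually_ge_atTop D]
    with x hg₁ hg₂ hℓβ hℓD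
  constructor <;> nlinarith

theorem log_add_div_div_eq (t T B : ℝ) (ht : 0 < t) (hT : 0 < T) (hB : 0 < B) :
    log ((t / T + B) / (t / T)) = log (1 / t) + log (t + B * T) := by
  rw [← log_mul (by positivity) (by positivity)]
  congr 1
  field_simp

theorem one_div_one_add_mul_eq_inv {m T : ℝ} (hm : m < 0) (hT : T = -1 / m) (τ x : ℝ) :
    1 / (1 + τ * x) = ((T - τ) / T + τ * (x - m))⁻¹ := by
  have := hm.ne
  subst hT
  field_simp
  ring

theorem IsCompact.exists_pos_le_of_forall_le_norm_sub {E : Type*} [SeminormedAddCommGroup E]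
    {Q : Set E} (hQ : IsCompact Q) {ψ : E → ℝ} (hψ : ContinuousOn ψ Q) (hψ0 : ∀ a ∈ Q, 0 ≤ ψ a)
    {S : Finset E} (hzero : ∀ a ∈ Q, ψ a = 0 → a ∈ S) {r : ℝ} (hr : 0 < r) :
    ∃ δ > 0, ∀ a ∈ Q, (∀ i ∈ S, r ≤ ‖a - i‖) → δ ≤ ψ a := by
  set T := Q ∩ {a | ∀ i ∈ S, r ≤ ‖a - i‖}
  have hT : IsCompact T := hQ.inter_right <| by
    simp only [ofPred_forall]
    exact isClosed_biInter fun i _ => isClosed_le continuous_const (continuous_sub_right i).norm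
  have hpos : ∀ a ∈ T, 0 < ψ a := fun a ⟨haQ, hfar⟩ => (hψ0 a haQ).lt_of_ne fun h => by
    simpa using (hfar a (hzero a haQ h.symm)).trans_lt' hr
  obtain ⟨δ, hδ, hδψ⟩ := hT.exists_forall_le' (hψ.mono inter_subset_left) hpos
  exact ⟨δ, hδ, fun a haQ hfar => hδψ a ⟨haQ, hfar⟩⟩

theorem integrableOn_inv_add_mul_sub {X : Type*} [TopologicalSpace X] [T2Space X]
    [MeasurableSpace X] [OpensMeasurableSpace X] {μ : Measure X} [IsFiniteMeasureOnCompacts μ]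
    {Q : Set X} (hQ : IsCompact Q) {φ : X → ℝ} (hφ : ContinuousOn φ Q) {m : ℝ}
    (hmin : ∀ a ∈ Q, m ≤ φ a) {ε τ : ℝ} (hε : 0 < ε) (hτ : 0 ≤ τ) :
    IntegrableOn (fun a => (ε + τ * (φ a - m))⁻¹) Q μ :=
  ContinuousOn.integrableOn_compact hQ <|
    ContinuousOn.inv₀ (by fun_prop) fun a ha =>
      (add_pos_of_pos_of_nonneg hε (mul_nonneg hτ (sub_nonneg.2 (hmin a ha)))).ne'

theorem inv_add_le_sum_indicator_add_inv {X : Type*} [SeminormedAddCommGroup X] {S : Finset X}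
    {ψ : X → ℝ} {ε K r δ : ℝ} (hε : 0 < ε) (hK : 0 ≤ K) (hδ : 0 < δ) {a : X}
    (hnear : ∀ i ∈ S, ‖a - i‖ ≤ r → K * ‖a - i‖ ^ 2 ≤ ψ a)
    (hfar : (∀ i ∈ S, r ≤ ‖a - i‖) → δ ≤ ψ a) :
    (ε + ψ a)⁻¹
      ≤ ∑ i ∈ S, (closedBall i r).indicator (fun x => (ε + K * ‖x - i‖ ^ 2)⁻¹) a + δ⁻¹ := by
  have hind0 : ∀ i, 0 ≤ (closedBall i r).indicator (fun x => (ε + K * ‖x - i‖ ^ 2)⁻¹) a :=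
    fun i => indicator_nonneg (fun x _ => by positivity) a
  by_cases hclose : ∃ i ∈ S, ‖a - i‖ ≤ r
  · obtain ⟨i, hi, hai⟩ := hclose
    calc (ε + ψ a)⁻¹ ≤ (ε + K * ‖a - i‖ ^ 2)⁻¹ :=
          inv_anti₀ (by positivity) (by linarith [hnear i hi hai])
      _ = (closedBall i r).indicator (fun x => (ε + K * ‖x - i‖ ^ 2)⁻¹) a :=
          (indicator_of_mem (mem_closedBall_iff_norm.2 hai) (fun x => (ε + K * ‖x - i‖ ^ 2)⁻¹)).symm
      _ ≤ ∑ i ∈ S, (closedBall i r).indicator (fun x => (ε + K * ‖x - i‖ ^ 2)⁻¹) a :=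
          Finset.single_le_sum (fun j _ => hind0 j) hi
      _ ≤ _ := le_add_of_nonneg_right (inv_nonneg.2 hδ.le)
  · push Not at hclose
    calc (ε + ψ a)⁻¹ ≤ δ⁻¹ := inv_anti₀ hδ (by linarith [hfar fun i hi => (hclose i hi).le])
      _ ≤ _ := le_add_of_nonneg_left (Finset.sum_nonneg fun i _ => hind0 i)

theorem integral_mul_inv_add_mul_sq {ε K : ℝ} (hε : 0 < ε) (hK : 0 < K) (r : ℝ) :
    ∫ y in (0 : ℝ)..r, y * (ε + K * y ^ 2)⁻¹ = (2 * K)⁻¹ * log ((ε + K * r ^ 2) / ε) := by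
  have hpos : ∀ y : ℝ, 0 < ε + K * y ^ 2 := fun y => by positivity
  have hderiv : ∀ y : ℝ,
      HasDerivAt (fun y => (2 * K)⁻¹ * log (ε + K * y ^ 2)) (y * (ε + K * y ^ 2)⁻¹) y := by
    intro y
    refine ((((hasDerivAt_pow 2 y).const_mul K).const_add ε).log (hpos y).ne'
      |>.const_mul (2 * K)⁻¹).congr_deriv ?_
    field_simp
    norm_num
  rw [intervalIntegral.integral_eq_sub_of_hasDerivAt (fun y _ => hderiv y)
    ((continuous_id.mul (Continuous.inv₀ (by fun_prop) fun y => (hpos y).ne')).intervalIntegrable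
      0 r),
    log_div (hpos r).ne' hε.ne']
  simp [mul_sub]

section Plane

variable {E : Type*} [NormedAddCommGroup E] [NormedSpace ℝ E] [FiniteDimensional ℝ E]
  [MeasurableSpace E] [BorelSpace E]

theorem setIntegral_closedBall_inv_add_mul_norm_sq (μ : Measure E) [μ.IsAddHaarMeasure]
    (hE : Module.finrank ℝ E = 2) {ε K r : ℝ} (hε : 0 < ε) (hK : 0 < K) (hr : 0 ≤ r) (z : E) :
    ∫ x in closedBall z r, (ε + K * ‖x - z‖ ^ 2)⁻¹ ∂μ
      = μ.real (ball 0 1) * K⁻¹ * log ((ε + K * r ^ 2) / ε) := by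
  have : Nontrivial E := Module.nontrivial_of_finrank_eq_succ hE
  set f : ℝ → ℝ := (Iic r).indicator fun y => (ε + K * y ^ 2)⁻¹
  have hf : ∀ y : ℝ, y ^ (2 - 1) • f y = (Iic r).indicator (fun y => y * (ε + K * y ^ 2)⁻¹) y := by
    intro y
    by_cases hy : y ≤ r <;> simp [f, hy]
  calc ∫ x in closedBall z r, (ε + K * ‖x - z‖ ^ 2)⁻¹ ∂μ
      = ∫ x, f ‖x - z‖ ∂μ := by
        rw [← integral_indicator measurableSet_closedBall]
        congr 1 with x
        by_cases hx : ‖x - z‖ ≤ r <;> simp [f, dist_eq_norm, hx]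
    _ = ∫ x, f ‖x‖ ∂μ := integral_sub_right_eq_self (fun x => f ‖x‖) z
    _ = 2 * μ.real (ball 0 1) * ∫ y in Ioc 0 r, y * (ε + K * y ^ 2)⁻¹ := by
        rw [integral_fun_norm_addHaar, hE]
        simp only [hf, setIntegral_indicator measurableSet_Iic, Ioi_inter_Iic, smul_eq_mul]
        ring
    _ = μ.real (ball 0 1) * K⁻¹ * log ((ε + K * r ^ 2) / ε) := by
        rw [← intervalIntegral.integral_of_le hr, integral_mul_inv_add_mul_sq hε hK]
        field_simp

variable {μ : Measure E} [μ.IsAddHaarMeasure]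

theorem integrableOn_closedBall_inv_add_mul_norm_sq {ε K : ℝ} (hε : 0 < ε) (hK : 0 ≤ K) (z : E)
    (r : ℝ) : IntegrableOn (fun a => (ε + K * ‖a - z‖ ^ 2)⁻¹) (closedBall z r) μ :=
  ContinuousOn.integrableOn_compact (isCompact_closedBall z r) <|
    (Continuous.inv₀ (by fun_prop) fun a =>
      (by positivity : 0 < ε + K * ‖a - z‖ ^ 2).ne').continuousOn

theorem le_setIntegral_inv_add_of_le_mul_norm_sq (hE : Module.finrank ℝ E = 2) {Q : Set E}
    (hQ : MeasurableSet Q) {ψ : E → ℝ} {ε K ρ : ℝ} {z : E} (hε : 0 < ε) (hK : 0 < K)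
    (hρ : 0 ≤ ρ) (hball : closedBall z ρ ⊆ Q) (hψ0 : ∀ a ∈ Q, 0 ≤ ψ a)
    (hψ : ∀ a ∈ closedBall z ρ, ψ a ≤ K * ‖a - z‖ ^ 2)
    (hint : IntegrableOn (fun a => (ε + ψ a)⁻¹) Q μ) :
    μ.real (ball 0 1) * K⁻¹ * log ((ε + K * ρ ^ 2) / ε) ≤ ∫ a in Q, (ε + ψ a)⁻¹ ∂μ := by
  rw [← setIntegral_closedBall_inv_add_mul_norm_sq μ hE hε hK hρ z]
  calc ∫ a in closedBall z ρ, (ε + K * ‖a - z‖ ^ 2)⁻¹ ∂μ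
      ≤ ∫ a in closedBall z ρ, (ε + ψ a)⁻¹ ∂μ :=
        setIntegral_mono_on (integrableOn_closedBall_inv_add_mul_norm_sq hε hK.le z ρ)
          (hint.mono_set hball) measurableSet_closedBall fun a ha =>
            inv_anti₀ (by linarith [hψ0 a (hball ha)]) (by linarith [hψ a ha])
    _ ≤ ∫ a in Q, (ε + ψ a)⁻¹ ∂μ :=
        setIntegral_mono_set hint ((ae_restrict_iff' hQ).2 (ae_of_all _ fun a ha =>
          inv_nonneg.2 (by linarith [hψ0 a ha]))) hball.eventuallyLE

theorem setIntegral_inv_add_le_of_mul_norm_sq_le (hE : Module.finrank ℝ E = 2) {Q : Set E}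
    (hQ : MeasurableSet Q) (hQμ : μ Q ≠ ⊤) {ψ : E → ℝ} {S : Finset E} {ε K r δ : ℝ}
    (hε : 0 < ε) (hK : 0 < K) (hr : 0 ≤ r) (hδ : 0 < δ)
    (hnear : ∀ i ∈ S, ∀ a ∈ Q, ‖a - i‖ ≤ r → K * ‖a - i‖ ^ 2 ≤ ψ a)
    (hfar : ∀ a ∈ Q, (∀ i ∈ S, r ≤ ‖a - i‖) → δ ≤ ψ a)
    (hint : IntegrableOn (fun a => (ε + ψ a)⁻¹) Q μ) :
    ∫ a in Q, (ε + ψ a)⁻¹ ∂μ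
      ≤ S.card * (μ.real (ball 0 1) * K⁻¹ * log ((ε + K * r ^ 2) / ε)) + δ⁻¹ * μ.real Q := by
  set g : E → E → ℝ := fun i => (closedBall i r).indicator fun a => (ε + K * ‖a - i‖ ^ 2)⁻¹
  have hg0 : ∀ i a, 0 ≤ g i a := fun i => indicator_nonneg fun a _ => by positivity
  have hgint : ∀ i, Integrable (g i) μ := fun i =>
    (integrableOn_closedBall_inv_add_mul_norm_sq hε hK.le i r).integrable_indicator
      measurableSet_closedBall
  calc ∫ a in Q, (ε + ψ a)⁻¹ ∂μ ≤ ∫ a in Q, (∑ i ∈ S, g i a + δ⁻¹) ∂μ :=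
        setIntegral_mono_on hint ((integrable_finsetSum S fun i _ => (hgint i).integrableOn).add
          (integrableOn_const hQμ)) hQ fun a ha =>
            inv_add_le_sum_indicator_add_inv hε hK.le hδ (fun i hi => hnear i hi a ha) (hfar a ha)
    _ = ∑ i ∈ S, ∫ a in Q, g i a ∂μ + δ⁻¹ * μ.real Q := by
        rw [integral_add (integrable_finsetSum S fun i _ => (hgint i).integrableOn)
          (integrableOn_const hQμ), integral_finsetSum S fun i _ => (hgint i).integrableOn,
          setIntegral_const, smul_eq_mul, mul_comm]
    _ ≤ ∑ i ∈ S, μ.real (ball 0 1) * K⁻¹ * log ((ε + K * r ^ 2) / ε) + δ⁻¹ * μ.real Q := by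
        gcongr with i
        calc ∫ a in Q, g i a ∂μ ≤ ∫ a, g i a ∂μ :=
              setIntegral_le_integral (hgint i) (ae_of_all _ (hg0 i))
          _ = _ := by
              rw [integral_indicator measurableSet_closedBall,
                setIntegral_closedBall_inv_add_mul_norm_sq μ hE hε hK hr]
    _ = _ := by rw [Finset.sum_const, nsmul_eq_mul]

variable {Q : Set E} {φ : E → ℝ} {m T : ℝ}

theorem eventually_le_setIntegral_one_div_one_add_mul (hE : Module.finrank ℝ E = 2) (hm : m < 0)
    (hT : T = -1 / m) (hQ : IsCompact Q) (hφ : ContinuousOn φ Q) (hmin : ∀ a ∈ Q, m ≤ φ a)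
    {z : E} {ρ c : ℝ} (hρ : 0 < ρ) (hc : 0 < c) (hball : closedBall z ρ ⊆ Q)
    (hφz : ∀ a ∈ closedBall z ρ, φ a - m ≤ c * ‖a - z‖ ^ 2) :
    ∃ α > 0, ∃ β, ∀ᶠ τ in 𝓝[<] T, α * (log (1 / (T - τ)) + β) ≤ ∫ a in Q, 1 / (1 + τ * φ a) ∂μ := by
  have hT0 : 0 < T := hT ▸ div_pos_of_neg_of_neg (by norm_num) hm
  set K := T * c
  have hK : 0 < K := mul_pos hT0 hc
  have hω : 0 < μ.real (ball 0 1) :=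
    ENNReal.toReal_pos (measure_ball_pos μ 0 one_pos).ne' measure_ball_lt_top.ne
  refine ⟨μ.real (ball 0 1) * K⁻¹, by positivity, log (K * ρ ^ 2 * T), ?_⟩
  filter_upwards [Ioo_mem_nhdsLT hT0] with τ ⟨hτ0, hτT⟩
  have hε : 0 < (T - τ) / T := div_pos (sub_pos.2 hτT) hT0
  have hψ : ∀ a ∈ closedBall z ρ, τ * (φ a - m) ≤ K * ‖a - z‖ ^ 2 := fun a ha =>
    calc τ * (φ a - m) ≤ T * (c * ‖a - z‖ ^ 2) :=
          mul_le_mul hτT.le (hφz a ha) (sub_nonneg.2 (hmin a (hball ha))) hT0.le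
      _ = K * ‖a - z‖ ^ 2 := by ring
  simp_rw [one_div_one_add_mul_eq_inv hm hT τ]
  calc μ.real (ball 0 1) * K⁻¹ * (log (1 / (T - τ)) + log (K * ρ ^ 2 * T))
      ≤ μ.real (ball 0 1) * K⁻¹ * log (((T - τ) / T + K * ρ ^ 2) / ((T - τ) / T)) := by
        rw [log_add_div_div_eq _ _ _ (sub_pos.2 hτT) hT0 (by positivity)]
        gcongr
        linarith
    _ ≤ _ := le_setIntegral_inv_add_of_le_mul_norm_sq hE hQ.measurableSet hε hK hρ.le hball
        (fun a ha => mul_nonneg hτ0.le (sub_nonneg.2 (hmin a ha))) hψ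
        (integrableOn_inv_add_mul_sub hQ hφ hmin hε hτ0.le)

theorem eventually_setIntegral_one_div_one_add_mul_le (hE : Module.finrank ℝ E = 2) (hm : m < 0)
    (hT : T = -1 / m) (hQ : IsCompact Q) (hφ : ContinuousOn φ Q) (hmin : ∀ a ∈ Q, m ≤ φ a)
    {S : Finset E} (hzero : ∀ a ∈ Q, φ a = m → a ∈ S) {r c : ℝ} (hr : 0 < r) (hc : 0 < c)
    (hnear : ∀ i ∈ S, ∀ a ∈ Q, ‖a - i‖ ≤ r → c * ‖a - i‖ ^ 2 ≤ φ a - m) :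
    ∃ A ≥ 0, ∃ D, ∀ᶠ τ in 𝓝[<] T, ∫ a in Q, 1 / (1 + τ * φ a) ∂μ ≤ A * log (1 / (T - τ)) + D := by
  have hT0 : 0 < T := hT ▸ div_pos_of_neg_of_neg (by norm_num) hm
  obtain ⟨δ, hδ, hfar⟩ := hQ.exists_pos_le_of_forall_le_norm_sub (hφ.sub continuousOn_const)
    (fun a ha => sub_nonneg.2 (hmin a ha)) (fun a ha h => hzero a ha (sub_eq_zero.1 h)) hr
  set K := T / 2 * c
  have hK : 0 < K := by positivity
  set A := S.card * (μ.real (ball 0 1) * K⁻¹)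
  refine ⟨A, by positivity, A * log ((1 + K * r ^ 2) * T) + (T / 2 * δ)⁻¹ * μ.real Q, ?_⟩
  filter_upwards [Ioo_mem_nhdsLT (half_lt_self hT0)] with τ ⟨hτ, hτT⟩
  have hε : 0 < (T - τ) / T := div_pos (sub_pos.2 hτT) hT0
  have hψnear : ∀ i ∈ S, ∀ a ∈ Q, ‖a - i‖ ≤ r → K * ‖a - i‖ ^ 2 ≤ τ * (φ a - m) :=
    fun i hi a ha hai => calc K * ‖a - i‖ ^ 2 = T / 2 * (c * ‖a - i‖ ^ 2) := by ring
      _ ≤ τ * (φ a - m) := mul_le_mul hτ.le (hnear i hi a ha hai) (by positivity) (by linarith)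
  have hψfar : ∀ a ∈ Q, (∀ i ∈ S, r ≤ ‖a - i‖) → T / 2 * δ ≤ τ * (φ a - m) :=
    fun a ha hfar' => mul_le_mul hτ.le (hfar a ha hfar') hδ.le (by linarith)
  simp_rw [one_div_one_add_mul_eq_inv hm hT τ]
  calc _ ≤ S.card * (μ.real (ball 0 1) * K⁻¹ * log (((T - τ) / T + K * r ^ 2) / ((T - τ) / T)))
          + (T / 2 * δ)⁻¹ * μ.real Q :=
        setIntegral_inv_add_le_of_mul_norm_sq_le hE hQ.measurableSet hQ.measure_lt_top.ne hε hK
          hr.le (by positivity) hψnear hψfar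
          (integrableOn_inv_add_mul_sub hQ hφ hmin hε (by linarith))
    _ ≤ A * (log (1 / (T - τ)) + log ((1 + K * r ^ 2) * T)) + (T / 2 * δ)⁻¹ * μ.real Q := by
        rw [log_add_div_div_eq _ _ _ (sub_pos.2 hτT) hT0 (by positivity), ← mul_assoc]
        gcongr
        linarith
    _ = A * log (1 / (T - τ)) + (A * log ((1 + K * r ^ 2) * T) + (T / 2 * δ)⁻¹ * μ.real Q) := by
        ring

end Plane

theorem stmt_13_general
    (L : ℝ) (hL : 0 < L)
    (Q : Set (ℝ × ℝ)) (hQ : Q = Set.Icc (0, 0) (L, L))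
    (φ₀ : ℝ × ℝ → ℝ) (hφcont : ContinuousOn φ₀ Q)
    (m₀ : ℝ) (hmin : ∀ a ∈ Q, m₀ ≤ φ₀ a) (hatt : ∃ a ∈ Q, φ₀ a = m₀)
    (hm₀ : m₀ < 0)
    (τstar : ℝ) (hτstar : τstar = -1 / m₀)
    (F : ℝ → ℝ)
    (hF : ∀ τ ∈ Set.Ico 0 τstar, F τ = (1 / L ^ 2) * ∫ a in Q, 1 / (1 + τ * φ₀ a))
    (hnd : Nondegenerate Q φ₀ m₀) :
    ∃ c > (0 : ℝ), ∃ C > (0 : ℝ), ∃ τ₀ ∈ Set.Ioo 0 τstar,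
      ∀ τ ∈ Set.Ioo τ₀ τstar,
        c * Real.log (1 / (τstar - τ)) ≤ F τ ∧
        F τ ≤ C * Real.log (1 / (τstar - τ)) := by
  obtain ⟨S, hS, hSint, r, hr, c₁, c₂, hc₁, hc₁₂, hbd⟩ := hnd
  have hE : Module.finrank ℝ (ℝ × ℝ) = 2 := by simp
  have hQc : IsCompact Q := hQ ▸ isCompact_Icc
  have hτs : 0 < τstar := hτstar ▸ div_pos_of_neg_of_neg (by norm_num) hm₀
  obtain ⟨a₀, ha₀Q, ha₀⟩ := hatt
  have ha₀S : a₀ ∈ S := by rw [← Finset.mem_coe, hS]; exact ⟨ha₀Q, ha₀⟩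
  obtain ⟨ρ, hρ, hρr, hρQ⟩ : ∃ ρ > 0, ρ ≤ r ∧ closedBall a₀ ρ ⊆ Q := by
    obtain ⟨ρ, hρ, hρQ⟩ :=
      nhds_basis_closedBall.mem_iff.1 (mem_interior_iff_mem_nhds.1 (hSint ha₀S))
    exact ⟨min ρ r, lt_min hρ hr, min_le_right _ _,
      (closedBall_subset_closedBall (min_le_left _ _)).trans hρQ⟩
  obtain ⟨α, hα, β, hlow⟩ := eventually_le_setIntegral_one_div_one_add_mul (μ := volume) hE hm₀
    hτstar hQc hφcont hmin hρ (hc₁.trans_le hc₁₂) hρQ fun a ha =>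
      (hbd a₀ ha₀S a (hρQ ha) ((mem_closedBall_iff_norm.1 ha).trans hρr)).2
  obtain ⟨A, hA, D, hup⟩ := eventually_setIntegral_one_div_one_add_mul_le (μ := volume) hE hm₀
    hτstar hQc hφcont hmin (fun a ha h => by rw [← Finset.mem_coe, hS]; exact ⟨ha, h⟩) hr hc₁
    fun i hi a ha h => (hbd i hi a ha h).1
  have hFeq : ∀ᶠ τ in 𝓝[<] τstar, F τ = 1 / L ^ 2 * ∫ a in Q, 1 / (1 + τ * φ₀ a) := by
    filter_upwards [Ioo_mem_nhdsLT hτs] with τ hτ using hF τ (Ioo_subset_Ico_self hτ)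
  obtain ⟨τ₀, hτ₀, hτ₀P⟩ := exists_mem_Ioo_forall_of_eventually_nhdsLT hτs
    ((eventually_half_mul_le_and_le_add_one_mul (tendsto_log_one_div_sub_nhdsLT τstar) hα hlow
      hup).and hFeq)
  refine ⟨1 / L ^ 2 * (α / 2), by positivity, 1 / L ^ 2 * (A + 1), by positivity, τ₀, hτ₀,
    fun τ hτ => ?_⟩
  obtain ⟨⟨hαle, hleA⟩, hFτ⟩ := hτ₀P τ hτ
  rw [hFτ, mul_assoc, mul_assoc]
  exact ⟨by gcongr, by gcongr⟩

/-- If `φ₀` is nondegenerate, there exist `c, C > 0` and `τ₀ ∈ (0,τ*)` with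
`c·log(1/(τ*−τ)) ≤ F(τ) ≤ C·log(1/(τ*−τ))` for all `τ ∈ (τ₀,τ*)`. -/
theorem stmt_13
    (L : ℝ) (hL : 0 < L)
    (Q : Set (ℝ × ℝ)) (hQ : Q = Set.Icc (0, 0) (L, L))
    (φ₀ : ℝ × ℝ → ℝ) (hφcont : ContinuousOn φ₀ Q)
    (hmean : ∫ a in Q, φ₀ a = 0)
    (m₀ : ℝ) (hmin : ∀ a ∈ Q, m₀ ≤ φ₀ a) (hatt : ∃ a ∈ Q, φ₀ a = m₀)
    (hm₀ : m₀ < 0)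
    (τstar : ℝ) (hτstar : τstar = -1 / m₀)
    (F : ℝ → ℝ)
    (hF : ∀ τ ∈ Set.Ico 0 τstar, F τ = (1 / L ^ 2) * ∫ a in Q, 1 / (1 + τ * φ₀ a))
    (hnd : Nondegenerate Q φ₀ m₀) :
    ∃ c > (0 : ℝ), ∃ C > (0 : ℝ), ∃ τ₀ ∈ Set.Ioo 0 τstar,
      ∀ τ ∈ Set.Ioo τ₀ τstar,
        c * Real.log (1 / (τstar - τ)) ≤ F τ ∧
        F τ ≤ C * Real.log (1 / (τstar - τ)) :=
  stmt_13_general L hL Q hQ φ₀ hφcont m₀ hmin hatt hm₀ τstar hτstar F hF hnd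
end
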